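/- arXiv:2511.00311 — 5 statements merged into one kernel-verified Lean document; each statement's English description precedes it below -/
import Mathlib

section
/- Let θ be irrational, N ≥ 2, and let π be the permutation of {0,...,N-1} sorting the Kronecker sequence terms a_0,...,a_{N-1} (a_n = nθ mod 1) increasingly. If N = π(1) + π(N-1), then for every i, the successor function S(i) = π(π⁻¹(i)+1 mod N) satisfies S(i) ≡ i + π(1) (mod N). -/
private lemma fract_add_cases' (x y : ℝ) :
    Int.fract (x + y) = Int.fract x + Int.fract y ∨
    Int.fract (x + y) = Int.fract x + Int.fract y - 1 := by
  obtain ⟨z, hz⟩ := Int.fract_add x y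
  have h1 : (0:ℝ) ≤ Int.fract (x+y) := Int.fract_nonneg _
  have h2 : Int.fract (x+y) < 1 := Int.fract_lt_one _
  have h3 : (0:ℝ) ≤ Int.fract x := Int.fract_nonneg _
  have h4 : Int.fract x < 1 := Int.fract_lt_one _
  have h5 : (0:ℝ) ≤ Int.fract y := Int.fract_nonneg _
  have h6 : Int.fract y < 1 := Int.fract_lt_one _
  have hz1 : (z:ℝ) < 1 := by linarith
  have hz2 : (-2:ℝ) < (z:ℝ) := by linarith
  have hz1' : z < 1 := by exact_mod_cast hz1
  have hz2' : (-2:ℤ) < z := by exact_mod_cast hz2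
  have : z = 0 ∨ z = -1 := by omega
  rcases this with h | h
  · left; rw [h] at hz; push_cast at hz; linarith
  · right; rw [h] at hz; push_cast at hz; linarith

/-- The combinatorial core: if `a : ℕ → ℝ` takes values in `[0,1)`, is "additive
mod 1", vanishes only at `0` (among indices `< N`), has minimum positive value at
`p` and maximum value at `q` with `p + q = N`, then for any index `i < N` with
`i ≠ q`, the index `s = i + p (mod N)` carries the immediate successor value. -/
private lemma kronecker_core (a : ℕ → ℝ) (N p q : ℕ)
    (hp : 1 ≤ p) (hq : 1 ≤ q) (hpq : p + q = N)
    (anneg : ∀ n : ℕ, 0 ≤ a n) (alt1 : ∀ n : ℕ, a n < 1)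
    (addc : ∀ m n : ℕ, a (m + n) = a m + a n ∨ a (m + n) = a m + a n - 1)
    (apos : ∀ m : ℕ, 1 ≤ m → m < N → 0 < a m)
    (amin : ∀ m : ℕ, 1 ≤ m → m < N → a p ≤ a m)
    (amax : ∀ m : ℕ, m < N → a m ≤ a q)
    (i : ℕ) (hiN : i < N) (hiq : i ≠ q) :
    a i < a (if i < q then i + p else i - q) ∧
      ∀ j : ℕ, j < N → a i < a j → a (if i < q then i + p else i - q) ≤ a j := by
  have claimA : ∀ m : ℕ, m + p < N → a (m + p) = a m + a p := by
    intro m hm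
    rcases addc m p with h | h
    · exact h
    · exfalso
      have h1 := amin (m + p) (by omega) hm
      have h2 := alt1 m
      linarith
  have claimB : ∀ m : ℕ, q < m → m < N → a (m - q) = a m + 1 - a q := by
    intro m h1 h2
    have hm' : m - q + q = m := by omega
    rcases addc (m - q) q with h | h
    · exfalso
      rw [hm'] at h
      have := apos (m - q) (by omega) (by omega)
      have := amax m h2
      linarith
    · rw [hm'] at h; linarith
  constructor
  · split
    · rename_i h
      rw [claimA i (by omega)]
      have := apos p hp (by omega)
      linarith
    · rename_i h
      rw [claimB i (by omega) hiN]
      have := alt1 q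
      linarith
  · intro j hj hij
    by_contra hcon
    push_neg at hcon
    rcases lt_trichotomy j i with hlt | heq | hlt
    · -- j < i
      have hm' : j + (i - j) = i := by omega
      rcases addc j (i - j) with h | h
      · rw [hm'] at h
        have := apos (i - j) (by omega) (by omega)
        linarith
      · rw [hm'] at h
        by_cases hcase : i < q
        · rw [if_pos hcase, claimA i (by omega)] at hcon
          have hmq : (i - j) + p < N := by omega
          have hAA := claimA (i - j) hmq
          have := alt1 ((i - j) + p)
          linarith
        · rw [if_neg hcase, claimB i (by omega) hiN] at hcon
          have := amax (i - j) (by omega)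
          linarith
    · rw [heq] at hij; linarith
    · -- j > i
      have hm' : i + (j - i) = j := by omega
      rcases addc i (j - i) with h | h
      · rw [hm'] at h
        by_cases hcase : i < q
        · rw [if_pos hcase, claimA i (by omega)] at hcon
          have := amin (j - i) (by omega) (by omega)
          linarith
        · rw [if_neg hcase, claimB i (by omega) hiN] at hcon
          have hmN : (j - i) + q < N := by omega
          rcases addc (j - i) q with h2 | h2
          · have := amax ((j - i) + q) hmN
            have := apos (j - i) (by omega) (by omega)
            linarith
          · have := anneg ((j - i) + q)
            linarith
      · rw [hm'] at h
        have := alt1 (j - i)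
        linarith

/-- For irrational `θ` and `N = π(1) + π(N-1)`, where `π` is the permutation
sorting the first `N` Kronecker sequence terms `a_n = nθ mod 1` increasingly,
the successor function `S(i) = π(π⁻¹(i) + 1 mod N)` satisfies
`S(i) ≡ i + π(1) (mod N)` (stated as an equality in `Fin N`, whose addition is
modulo `N`). -/
theorem kronecker_successor_of_two_gaps (θ : ℝ) (hθ : Irrational θ)
    (N : ℕ) [NeZero N] (hN : 2 ≤ N) (π : Equiv.Perm (Fin N))
    (hsort : ∀ i j : Fin N, i < j →
      Int.fract ((π i : ℕ) * θ) < Int.fract ((π j : ℕ) * θ))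
    (hpq : N = (π 1 : ℕ) + (π ⟨N - 1, by omega⟩ : ℕ)) :
    ∀ i : Fin N, π (π.symm i + 1) = i + π 1 := by
  obtain ⟨a, ha⟩ : ∃ a : ℕ → ℝ, a = fun n : ℕ => Int.fract ((n : ℝ) * θ) := ⟨_, rfl⟩
  set p : ℕ := (π 1 : ℕ) with hp
  have hNF : N - 1 < N := by omega
  set q : ℕ := (π ⟨N - 1, hNF⟩ : ℕ) with hqdef
  have hpq : N = p + q := by rw [hpq]
  -- basic facts about a
  have anneg : ∀ n : ℕ, 0 ≤ a n := fun n => by rw [ha]; exact Int.fract_nonneg _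
  have alt1 : ∀ n : ℕ, a n < 1 := fun n => by rw [ha]; exact Int.fract_lt_one _
  have a0 : a 0 = 0 := by rw [ha]; simp
  have addc : ∀ m n : ℕ, a (m + n) = a m + a n ∨ a (m + n) = a m + a n - 1 := by
    intro m n
    have h : ((m + n : ℕ) : ℝ) * θ = (m : ℝ) * θ + (n : ℝ) * θ := by push_cast; ring
    rw [ha]
    simp only [h]
    exact fract_add_cases' _ _
  have hsort' : ∀ x y : Fin N, x < y → a (π x) < a (π y) := by
    intro x y h; rw [ha]; exact hsort x y h
  have mono : ∀ x y : Fin N, x ≤ y → a (π x) ≤ a (π y) := by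
    intro x y h
    rcases eq_or_lt_of_le h with rfl | h
    · exact le_refl _
    · exact (hsort' x y h).le
  have ainjF : ∀ x y : Fin N, a x = a y → x = y := by
    intro x y h
    by_contra hne
    have hx : π (π.symm x) = x := π.apply_symm_apply x
    have hy : π (π.symm y) = y := π.apply_symm_apply y
    rcases lt_trichotomy (π.symm x) (π.symm y) with hlt | heq | hlt
    · have := hsort' _ _ hlt; rw [hx, hy] at this; linarith
    · exact hne (by rw [← hx, ← hy, heq])
    · have := hsort' _ _ hlt; rw [hx, hy] at this; linarith
  have ainj : ∀ m n : ℕ, m < N → n < N → a m = a n → m = n := by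
    intro m n hm hn h
    have := ainjF ⟨m, hm⟩ ⟨n, hn⟩ h
    exact congrArg Fin.val this
  have hπ0 : π 0 = 0 := by
    have h1 : a (π 0) ≤ a (π (π.symm 0)) := mono _ _ (Fin.zero_le _)
    rw [π.apply_symm_apply] at h1
    have h2 : a ((0 : Fin N) : ℕ) = 0 := by rw [Fin.val_zero, a0]
    rw [h2] at h1
    have h3 : a ((π 0 : Fin N) : ℕ) = a ((0 : Fin N) : ℕ) :=
      le_antisymm (by rw [h2]; exact h1) (by rw [h2]; exact anneg _)
    exact ainjF _ _ h3
  have hval1 : ((1 : Fin N) : ℕ) = 1 := by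
    rw [Fin.val_one']; exact Nat.mod_eq_of_lt (by omega)
  have hppos : 1 ≤ p := by
    rcases Nat.eq_zero_or_pos p with h | h
    · exfalso
      have : π 1 = π 0 := by
        rw [hπ0]; apply Fin.ext; rw [Fin.val_zero, ← hp, h]
      have h10 := congrArg Fin.val (π.injective this)
      rw [hval1, Fin.val_zero] at h10
      exact one_ne_zero h10
    · exact h
  have hqpos : 1 ≤ q := by
    rcases Nat.eq_zero_or_pos q with h | h
    · exfalso
      have : π ⟨N - 1, hNF⟩ = π 0 := by
        rw [hπ0]; apply Fin.ext; rw [Fin.val_zero, ← hqdef, h]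
      have h10 := congrArg Fin.val (π.injective this)
      rw [Fin.val_zero] at h10
      simp only at h10
      omega
    · exact h
  have apos : ∀ m : ℕ, 1 ≤ m → m < N → 0 < a m := by
    intro m h1 h2
    rcases lt_or_eq_of_le (anneg m) with h | h
    · exact h
    · exfalso
      have : m = 0 := ainj m 0 h2 (by omega) (by rw [← h, a0])
      omega
  have amin : ∀ m : ℕ, 1 ≤ m → m < N → a p ≤ a m := by
    intro m h1 h2
    have hx : π (π.symm ⟨m, h2⟩) = ⟨m, h2⟩ := π.apply_symm_apply _
    have hvne : ((π.symm ⟨m, h2⟩ : Fin N) : ℕ) ≠ 0 := by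
      intro h
      have h0 : π.symm ⟨m, h2⟩ = 0 := Fin.ext (by rw [h, Fin.val_zero])
      rw [h0, hπ0] at hx
      have := congrArg Fin.val hx
      rw [Fin.val_zero] at this
      simp only at this
      omega
    have hle : (1 : Fin N) ≤ π.symm ⟨m, h2⟩ := by
      rw [Fin.le_def, hval1]; omega
    have := mono 1 _ hle
    rw [hx] at this
    exact this
  have amax : ∀ m : ℕ, m < N → a m ≤ a q := by
    intro m h2
    have hx : π (π.symm ⟨m, h2⟩) = ⟨m, h2⟩ := π.apply_symm_apply _
    have hle : π.symm ⟨m, h2⟩ ≤ ⟨N - 1, hNF⟩ := by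
      rw [Fin.le_def]
      have := (π.symm ⟨m, h2⟩).is_lt
      simp only
      omega
    have := mono _ _ hle
    rw [hx] at this
    exact this
  -- main
  intro i
  by_cases hiq : i = π ⟨N - 1, hNF⟩
  · subst hiq
    have hsy : π.symm (π ⟨N - 1, hNF⟩) = ⟨N - 1, hNF⟩ := π.symm_apply_apply _
    have hwrap : (⟨N - 1, hNF⟩ : Fin N) + 1 = 0 := by
      apply Fin.ext
      rw [Fin.val_add, hval1, Fin.val_zero]
      simp only
      rw [Nat.sub_add_cancel (by omega : 1 ≤ N), Nat.mod_self]
    rw [hsy, hwrap, hπ0]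
    apply Fin.ext
    rw [Fin.val_add, ← hp, Fin.val_zero, ← hqdef]
    rw [(by omega : q + p = N), Nat.mod_self]
  · -- main case
    have hivq : (i : ℕ) ≠ q := fun h => hiq (Fin.ext h)
    have hivN : (i : ℕ) < N := i.is_lt
    obtain ⟨hgt, hminS⟩ := kronecker_core a N p q hppos hqpos (by omega)
      anneg alt1 addc apos amin amax (i : ℕ) hivN hivq
    set sv : ℕ := if (i : ℕ) < q then (i : ℕ) + p else (i : ℕ) - q with hsv
    have hsvN : sv < N := by rw [hsv]; split <;> omega
    have hS : ((i + π 1 : Fin N) : ℕ) = sv := by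
      rw [Fin.val_add, ← hp, hsv]
      split
      · exact Nat.mod_eq_of_lt (by omega)
      · rename_i h
        have h1 : (i : ℕ) + p = ((i : ℕ) - q) + N := by omega
        rw [h1, Nat.add_mod_right]
        exact Nat.mod_eq_of_lt (by omega)
    set k : Fin N := π.symm i with hk
    have hπk : π k = i := π.apply_symm_apply i
    have hkN1 : (k : ℕ) < N - 1 := by
      have hkN : (k : ℕ) < N := k.is_lt
      rcases lt_or_eq_of_le (by omega : (k : ℕ) ≤ N - 1) with h | h
      · exact h
      · exfalso
        apply hiq
        rw [← hπk]
        congr 1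
        exact Fin.ext h
    have hk1v : ((k + 1 : Fin N) : ℕ) = (k : ℕ) + 1 := by
      rw [Fin.val_add, hval1]
      exact Nat.mod_eq_of_lt (by omega)
    have hklt : k < k + 1 := by rw [Fin.lt_def, hk1v]; omega
    have hstep : a (i : ℕ) < a (π (k + 1)) := by
      have := hsort' k (k + 1) hklt
      rw [hπk] at this
      exact this
    have hminπ : ∀ j : Fin N, a (i : ℕ) < a (j : ℕ) → a (π (k + 1)) ≤ a (j : ℕ) := by
      intro j hj
      have hy : k < π.symm j := by
        by_contra h
        push_neg at h
        have := mono _ _ h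
        rw [π.apply_symm_apply, hπk] at this
        linarith
      have hle : k + 1 ≤ π.symm j := by
        rw [Fin.le_def, hk1v]
        rw [Fin.lt_def] at hy
        omega
      have := mono _ _ hle
      rw [π.apply_symm_apply] at this
      exact this
    have e1 : a (π (k + 1)) ≤ a sv := by
      have := hminπ (i + π 1) (by rw [hS]; exact hgt)
      rw [hS] at this
      exact this
    have e2 : a sv ≤ a (π (k + 1)) := hminS _ (π (k + 1)).is_lt hstep
    have hfin : ((π (k + 1) : Fin N) : ℕ) = sv :=
      ainj _ _ (π (k + 1)).is_lt hsvN (le_antisymm e1 e2)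
    apply Fin.ext
    rw [hfin, hS]
end

section
/- (Three Gap Theorem, successor form) Let θ be irrational, N ≥ 2, and let π sort the first N terms of the Kronecker sequence a_n = nθ mod 1. With p = π(1) and q = π(N-1), the successor function S(i) = π(π⁻¹(i)+1 mod N) satisfies: S(i) - i = p if 0 ≤ i < N - p; S(i) - i = -q if q ≤ i < N; and S(i) - i = p - q if N - p ≤ i < q. -/
lemma tg_fract_eq {y x : ℝ} (z : ℤ) (h : y = x + z)
    (h0 : 0 ≤ x) (h1 : x < 1) : Int.fract y = x := by
  rw [h, Int.fract_add_intCast, Int.fract_eq_self.2 ⟨h0, h1⟩]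

lemma tg_inj {θ : ℝ} (hθ : Irrational θ) {a b : ℤ}
    (h : Int.fract ((a : ℝ) * θ) = Int.fract ((b : ℝ) * θ)) : a = b := by
  by_contra hne
  obtain ⟨z, hz⟩ := Int.fract_eq_fract.1 h
  have : ((a - b : ℤ) : ℝ) * θ = (z : ℤ) := by push_cast; linarith [hz]
  exact (hθ.intCast_mul (sub_ne_zero.2 hne)).ne_int z this

lemma tg_injN {θ : ℝ} (hθ : Irrational θ) {a b : ℕ}
    (h : Int.fract ((a : ℝ) * θ) = Int.fract ((b : ℝ) * θ)) : a = b := by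
  have h' : Int.fract (((a : ℤ) : ℝ) * θ) = Int.fract (((b : ℤ) : ℝ) * θ) := by
    push_cast; exact h
  exact_mod_cast tg_inj hθ h'

lemma tg_posN {θ : ℝ} (hθ : Irrational θ) {a : ℕ} (ha : a ≠ 0) :
    0 < Int.fract ((a : ℝ) * θ) := by
  rcases (Int.fract_nonneg ((a : ℝ) * θ)).lt_or_eq with h | h
  · exact h
  · exact absurd (tg_injN hθ (a := a) (b := 0) (by simp [← h])) ha

set_option maxHeartbeats 2000000 in
/-- The Three Gap Theorem, successor form. For irrational `θ`, let `π` sort the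
first `N` Kronecker sequence terms `a_n = nθ mod 1` increasingly, and set
`p = π(1)`, `q = π(N-1)`. Then the successor function
`S(i) = π(π⁻¹(i) + 1 mod N)` satisfies `S(i) - i = p` for `0 ≤ i < N - p`,
`S(i) - i = -q` for `q ≤ i < N`, and `S(i) - i = p - q` for `N - p ≤ i < q`. -/
theorem three_gap_successor (θ : ℝ) (hθ : Irrational θ)
    (N : ℕ) [NeZero N] (hN : 2 ≤ N) (π : Equiv.Perm (Fin N))
    (hsort : ∀ i j : Fin N, i < j →
      Int.fract ((π i : ℕ) * θ) < Int.fract ((π j : ℕ) * θ))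
    (p q : ℕ) (hp : p = (π 1 : ℕ)) (hq : q = (π ⟨N - 1, by omega⟩ : ℕ)) :
    ∀ i : Fin N,
      ((i : ℕ) < N - p → ((π (π.symm i + 1) : ℕ) : ℤ) - (i : ℕ) = p) ∧
      (q ≤ (i : ℕ) → ((π (π.symm i + 1) : ℕ) : ℤ) - (i : ℕ) = -(q : ℤ)) ∧
      (N - p ≤ (i : ℕ) → (i : ℕ) < q →
        ((π (π.symm i + 1) : ℕ) : ℤ) - (i : ℕ) = (p : ℤ) - q) := by
  have hfr1 : ∀ x : ℝ, Int.fract x < 1 := fun x => Int.fract_lt_one x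
  have hfr0 : ∀ x : ℝ, 0 ≤ Int.fract x := fun x => Int.fract_nonneg x
  -- π 0 = 0
  have hπ0 : π 0 = 0 := by
    have h0 : π.symm 0 = 0 := by
      by_contra h
      have hv : ((π.symm 0 : Fin N) : ℕ) ≠ 0 := by
        intro hv; exact h (Fin.ext (by simpa using hv))
      have hlt : (0 : Fin N) < π.symm 0 := by
        rw [Fin.lt_def]
        simpa using Nat.pos_of_ne_zero hv
      have h2 := hsort 0 (π.symm 0) hlt
      rw [Equiv.apply_symm_apply] at h2
      simp only [Fin.val_zero, Nat.cast_zero, zero_mul, Int.fract_zero] at h2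
      exact absurd h2 (not_lt.2 (hfr0 _))
    have := congrArg π h0
    rw [Equiv.apply_symm_apply] at this
    exact this.symm
  -- monotonicity
  have hmono_le : ∀ a b : Fin N, a ≤ b →
      Int.fract ((π a : ℕ) * θ) ≤ Int.fract ((π b : ℕ) * θ) := by
    intro a b hab
    rcases hab.lt_or_eq with h | h
    · exact (hsort a b h).le
    · rw [h]
  have hmono_rev : ∀ a b : Fin N,
      Int.fract ((π a : ℕ) * θ) < Int.fract ((π b : ℕ) * θ) → a < b := by
    intro a b h
    by_contra hc
    exact absurd h (not_lt.2 (hmono_le b a (not_lt.1 hc)))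
  -- minimality of p
  have hmin : ∀ d : ℕ, d ≠ 0 → d < N →
      Int.fract ((p : ℝ) * θ) ≤ Int.fract ((d : ℝ) * θ) := by
    intro d hd0 hdN
    have hj0 : ((π.symm ⟨d, hdN⟩ : Fin N) : ℕ) ≠ 0 := by
      intro h
      have h2 : π.symm ⟨d, hdN⟩ = 0 := Fin.ext (by simpa using h)
      have h3 := congrArg π h2
      rw [Equiv.apply_symm_apply, hπ0] at h3
      exact hd0 (by simpa using (congrArg Fin.val h3))
    have h1le : (1 : Fin N) ≤ π.symm ⟨d, hdN⟩ := by
      rw [Fin.le_def, Fin.val_one', Nat.mod_eq_of_lt (by omega)]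
      omega
    have h2 := hmono_le 1 (π.symm ⟨d, hdN⟩) h1le
    simp only [Equiv.apply_symm_apply] at h2
    rw [hp]
    simpa using h2
  -- maximality of q
  have hmax : ∀ d : ℕ, d < N →
      Int.fract ((d : ℝ) * θ) ≤ Int.fract ((q : ℝ) * θ) := by
    intro d hdN
    have hle : π.symm ⟨d, hdN⟩ ≤ (⟨N - 1, by omega⟩ : Fin N) := by
      rw [Fin.le_def]
      have h3 := (π.symm (⟨d, hdN⟩ : Fin N)).isLt
      have h4 : ((⟨N - 1, by omega⟩ : Fin N) : ℕ) = N - 1 := rfl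
      rw [h4]
      omega
    have h2 := hmono_le (π.symm ⟨d, hdN⟩) ⟨N - 1, by omega⟩ hle
    simp only [Equiv.apply_symm_apply] at h2
    rw [hq]
    simpa using h2
  have hinj : ∀ {a b : ℕ},
      Int.fract ((a : ℝ) * θ) = Int.fract ((b : ℝ) * θ) → a = b :=
    fun {a b} h => tg_injN hθ h
  have hmax' : ∀ d : ℕ, d < N → d ≠ q →
      Int.fract ((d : ℝ) * θ) < Int.fract ((q : ℝ) * θ) := by
    intro d hdN hdq
    rcases (hmax d hdN).lt_or_eq with h | h
    · exact h
    · exact absurd (hinj h) hdq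
  -- basic bounds on p, q
  have hplt : p < N := hp ▸ (π 1).isLt
  have hqlt : q < N := hq ▸ (π ⟨N - 1, by omega⟩).isLt
  have hppos : p ≠ 0 := by
    intro h
    have h2 : π 1 = π 0 := by
      rw [hπ0]; exact Fin.ext (by simp [← hp, h])
    have h1 : (1 : Fin N) = 0 := π.injective h2
    have h3 := congrArg Fin.val h1
    rw [Fin.val_one'] at h3
    simp only [Fin.val_zero] at h3
    rw [Nat.mod_eq_of_lt (by omega)] at h3
    omega
  have hqpos : q ≠ 0 := by
    intro h
    have h2 : π ⟨N - 1, by omega⟩ = π 0 := by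
      rw [hπ0]; exact Fin.ext (by simp [← hq, h])
    have h1 : (⟨N - 1, by omega⟩ : Fin N) = 0 := π.injective h2
    have h3 := congrArg Fin.val h1
    simp only [Fin.val_zero] at h3
    omega
  have hppos' := tg_posN hθ hppos
  have hqpos' := tg_posN hθ hqpos
  -- p + q ≥ N
  have hpq : N ≤ p + q := by
    by_contra h
    push_neg at h
    rcases lt_or_ge (Int.fract ((p : ℝ) * θ) + Int.fract ((q : ℝ) * θ)) 1 with hc | hc
    · have hsfr : Int.fract (((p + q : ℕ) : ℝ) * θ) =
          Int.fract ((p : ℝ) * θ) + Int.fract ((q : ℝ) * θ) := by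
        refine tg_fract_eq (⌊(p : ℝ) * θ⌋ + ⌊(q : ℝ) * θ⌋) ?_
          (add_nonneg (hfr0 _) (hfr0 _)) hc
        push_cast
        simp only [Int.fract]
        ring
      have h5 := hmax (p + q) (by omega)
      rw [hsfr] at h5
      linarith
    · have hsfr : Int.fract (((p + q : ℕ) : ℝ) * θ) =
          Int.fract ((p : ℝ) * θ) + Int.fract ((q : ℝ) * θ) - 1 := by
        refine tg_fract_eq (⌊(p : ℝ) * θ⌋ + ⌊(q : ℝ) * θ⌋ + 1) ?_
          (by linarith) (by linarith [hfr1 ((p : ℝ) * θ), hfr1 ((q : ℝ) * θ)])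
        push_cast
        simp only [Int.fract]
        ring
      have h5 := hmin (p + q) (by omega) (by omega)
      rw [hsfr] at h5
      linarith [hfr1 ((q : ℝ) * θ)]
  intro i
  have hiN : (i : ℕ) < N := i.isLt
  -- the key lemma: identify the successor with a candidate c
  have key : ∀ c : ℕ, (hc : c < N) →
      Int.fract ((i : ℕ) * θ) < Int.fract ((c : ℝ) * θ) →
      (∀ k : Fin N, Int.fract ((i : ℕ) * θ) < Int.fract ((k : ℕ) * θ) →
        Int.fract ((c : ℝ) * θ) ≤ Int.fract ((k : ℕ) * θ)) →
      (π (π.symm i + 1) : ℕ) = c := by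
    intro c hc hgt hstar
    have hmne : (π.symm i : ℕ) ≠ N - 1 := by
      intro h
      have hieq : π ⟨N - 1, by omega⟩ = i := by
        have := congrArg π (Fin.ext h : π.symm i = ⟨N - 1, by omega⟩)
        rw [Equiv.apply_symm_apply] at this
        exact this.symm
      have hiq : (i : ℕ) = q := by rw [hq, hieq]
      have h5 := hmax c hc
      rw [← hiq] at h5
      linarith
    have hval : ((π.symm i + 1 : Fin N) : ℕ) = (π.symm i : ℕ) + 1 := by
      have h1 : ((1 : Fin N) : ℕ) = 1 := by
        rw [Fin.val_one', Nat.mod_eq_of_lt (by omega)]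
      rw [Fin.val_add, h1]
      have := (π.symm i).isLt
      exact Nat.mod_eq_of_lt (by omega)
    have hlt2 : π.symm i < π.symm i + 1 := by
      rw [Fin.lt_def, hval]; omega
    have hgt' := hsort _ _ hlt2
    simp only [Equiv.apply_symm_apply] at hgt'
    have hge := hstar (π (π.symm i + 1)) hgt'
    have hle : Int.fract ((π (π.symm i + 1) : ℕ) * θ) ≤ Int.fract ((c : ℝ) * θ) := by
      have hkgt : π.symm i < π.symm ⟨c, hc⟩ := by
        apply hmono_rev
        simp only [Equiv.apply_symm_apply]
        exact hgt
      have hstep : π.symm i + 1 ≤ π.symm ⟨c, hc⟩ := by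
        rw [Fin.le_def, hval]
        rw [Fin.lt_def] at hkgt
        omega
      have h2 := hmono_le _ _ hstep
      simp only [Equiv.apply_symm_apply] at h2
      simpa using h2
    exact hinj (le_antisymm hle hge)
  refine ⟨?_, ?_, ?_⟩
  · -- case 1 : i < N - p, successor is i + p
    intro hi
    have hc : (i : ℕ) + p < N := by omega
    have hsum : Int.fract ((i : ℕ) * θ) + Int.fract ((p : ℝ) * θ) < 1 := by
      by_contra h
      push_neg at h
      have hcv : Int.fract (((i + p : ℕ) : ℝ) * θ) =
          Int.fract ((i : ℕ) * θ) + Int.fract ((p : ℝ) * θ) - 1 := by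
        refine tg_fract_eq (⌊((i : ℕ) : ℝ) * θ⌋ + ⌊(p : ℝ) * θ⌋ + 1) ?_
          (by linarith) (by linarith [hfr1 (((i : ℕ) : ℝ) * θ), hfr1 ((p : ℝ) * θ)])
        push_cast
        simp only [Int.fract]
        ring
      have h5 := hmin ((i : ℕ) + p) (by omega) hc
      rw [hcv] at h5
      linarith [hfr1 (((i : ℕ) : ℝ) * θ)]
    have hcval : Int.fract (((i + p : ℕ) : ℝ) * θ) =
        Int.fract ((i : ℕ) * θ) + Int.fract ((p : ℝ) * θ) := by
      refine tg_fract_eq (⌊((i : ℕ) : ℝ) * θ⌋ + ⌊(p : ℝ) * θ⌋) ?_ (add_nonneg (hfr0 _) (hfr0 _)) hsum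
      push_cast
      simp only [Int.fract]
      ring
    have hgt : Int.fract ((i : ℕ) * θ) < Int.fract (((i + p : ℕ) : ℝ) * θ) := by
      rw [hcval]; linarith
    have hstar : ∀ k : Fin N, Int.fract ((i : ℕ) * θ) < Int.fract ((k : ℕ) * θ) →
        Int.fract (((i + p : ℕ) : ℝ) * θ) ≤ Int.fract ((k : ℕ) * θ) := by
      intro k hk
      by_contra hlt
      push_neg at hlt
      rw [hcval] at hlt
      rcases lt_trichotomy ((k : ℕ)) ((i : ℕ)) with hik | hik | hik
      · -- k < i : set m = i - k, fract(mθ) = 1 - δ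
        have hm0 : (i : ℕ) - (k : ℕ) ≠ 0 := by omega
        have hmfr : Int.fract (((i - k : ℕ) : ℝ) * θ) =
            1 - (Int.fract ((k : ℕ) * θ) - Int.fract ((i : ℕ) * θ)) := by
          refine tg_fract_eq (⌊((i : ℕ) : ℝ) * θ⌋ - ⌊((k : ℕ) : ℝ) * θ⌋ - 1) ?_
            (by linarith [hfr1 (((k : ℕ) : ℝ) * θ), hfr0 (((i : ℕ) : ℝ) * θ)])
            (by linarith)
          push_cast [Nat.cast_sub hik.le]
          simp only [Int.fract]
          ring
        have he : ((i : ℕ) - (k : ℕ)) + p < N := by omega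
        have hefr : Int.fract (((((i : ℕ) - (k : ℕ)) + p : ℕ) : ℝ) * θ) =
            Int.fract ((p : ℝ) * θ) -
              (Int.fract ((k : ℕ) * θ) - Int.fract ((i : ℕ) * θ)) := by
          have h01 : (0:ℝ) ≤ Int.fract (((k : ℕ) : ℝ) * θ) := hfr0 _
          have h02 : Int.fract (((k : ℕ) : ℝ) * θ) < 1 := hfr1 _
          have h03 : (0:ℝ) ≤ Int.fract (((i : ℕ) : ℝ) * θ) := hfr0 _
          have h04 : Int.fract ((p : ℝ) * θ) < 1 := hfr1 _
          refine tg_fract_eq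
            (⌊(((i : ℕ) - (k : ℕ) : ℕ) : ℝ) * θ⌋ + ⌊(p : ℝ) * θ⌋ + 1) ?_
            (by linarith) (by linarith)
          have hexp := hmfr
          push_cast
          simp only [Int.fract] at hexp ⊢
          linarith
        have h5 := hmin (((i : ℕ) - (k : ℕ)) + p) (by omega) he
        rw [hefr] at h5
        linarith
      · have hkk : ((k : ℕ) : ℝ) = ((i : ℕ) : ℝ) := by exact_mod_cast hik
        rw [hkk] at hk
        exact lt_irrefl _ hk
      · -- k > i : dn = k - i
        have hdnfr : Int.fract (((k - i : ℕ) : ℝ) * θ) =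
            Int.fract ((k : ℕ) * θ) - Int.fract ((i : ℕ) * θ) := by
          refine tg_fract_eq (⌊((k : ℕ) : ℝ) * θ⌋ - ⌊((i : ℕ) : ℝ) * θ⌋) ?_
            (by linarith) (by linarith [hfr1 (((k : ℕ) : ℝ) * θ), hfr0 (((i : ℕ) : ℝ) * θ)])
          push_cast [Nat.cast_sub hik.le]
          simp only [Int.fract]
          ring
        have h5 := hmin ((k : ℕ) - (i : ℕ)) (by omega) (by have := k.isLt; omega)
        rw [hdnfr] at h5
        linarith
    have hkey := key ((i : ℕ) + p) hc hgt hstar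
    omega
  · -- case 2 : q ≤ i
    intro hi
    rcases eq_or_lt_of_le hi with hiq | hiq
    · -- i = q : wrap around
      have hieq : π ⟨N - 1, by omega⟩ = i := Fin.ext (by rw [← hq]; exact hiq)
      have hisymm : π.symm i = ⟨N - 1, by omega⟩ := by
        have h9 := congrArg π.symm hieq
        simp only [Equiv.symm_apply_apply] at h9
        exact h9.symm
      have hz : π.symm i + 1 = 0 := by
        apply Fin.ext
        rw [Fin.val_add, hisymm]
        have h1 : ((1 : Fin N) : ℕ) = 1 := by
          rw [Fin.val_one', Nat.mod_eq_of_lt (by omega)]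
        rw [h1]
        simp only [Fin.val_zero]
        show (N - 1 + 1) % N = 0
        rw [Nat.sub_add_cancel (by omega), Nat.mod_self]
      rw [hz, hπ0]
      simp only [Fin.val_zero, Nat.cast_zero]
      omega
    · -- q < i : successor is i - q
      have hiq' : Int.fract ((i : ℕ) * θ) < Int.fract ((q : ℝ) * θ) :=
        hmax' (i : ℕ) hiN (by omega)
      have hc : (i : ℕ) - q < N := by omega
      have hcval : Int.fract ((((i : ℕ) - q : ℕ) : ℝ) * θ) =
          Int.fract ((i : ℕ) * θ) + 1 - Int.fract ((q : ℝ) * θ) := by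
        refine tg_fract_eq (⌊((i : ℕ) : ℝ) * θ⌋ - ⌊(q : ℝ) * θ⌋ - 1) ?_
          (by linarith [hfr1 ((q : ℝ) * θ), hfr0 (((i : ℕ) : ℝ) * θ)])
          (by linarith)
        push_cast [Nat.cast_sub hiq.le]
        simp only [Int.fract]
        ring
      have hgt : Int.fract ((i : ℕ) * θ) < Int.fract ((((i : ℕ) - q : ℕ) : ℝ) * θ) := by
        rw [hcval]; linarith [hfr1 ((q : ℝ) * θ)]
      have hstar : ∀ k : Fin N, Int.fract ((i : ℕ) * θ) < Int.fract ((k : ℕ) * θ) →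
          Int.fract ((((i : ℕ) - q : ℕ) : ℝ) * θ) ≤ Int.fract ((k : ℕ) * θ) := by
        intro k hk
        by_contra hlt
        push_neg at hlt
        rw [hcval] at hlt
        rcases lt_trichotomy ((k : ℕ)) ((i : ℕ)) with hik | hik | hik
        · -- k < i : m = i - k, fract(mθ) = 1 - δ > fract(qθ), contra hmax
          have hmfr : Int.fract (((i - k : ℕ) : ℝ) * θ) =
              1 - (Int.fract ((k : ℕ) * θ) - Int.fract ((i : ℕ) * θ)) := by
            refine tg_fract_eq (⌊((i : ℕ) : ℝ) * θ⌋ - ⌊((k : ℕ) : ℝ) * θ⌋ - 1) ?_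
              (by linarith [hfr1 (((k : ℕ) : ℝ) * θ), hfr0 (((i : ℕ) : ℝ) * θ)])
              (by linarith)
            push_cast [Nat.cast_sub hik.le]
            simp only [Int.fract]
            ring
          have h5 := hmax ((i : ℕ) - (k : ℕ)) (by omega)
          rw [hmfr] at h5
          linarith
        · have hkk : ((k : ℕ) : ℝ) = ((i : ℕ) : ℝ) := by exact_mod_cast hik
          rw [hkk] at hk
          exact lt_irrefl _ hk
        · -- k > i : e = (k - i) + q, fract(eθ) = δ + fract(qθ) > fract(qθ)
          have hdnfr : Int.fract (((k - i : ℕ) : ℝ) * θ) =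
              Int.fract ((k : ℕ) * θ) - Int.fract ((i : ℕ) * θ) := by
            refine tg_fract_eq (⌊((k : ℕ) : ℝ) * θ⌋ - ⌊((i : ℕ) : ℝ) * θ⌋) ?_
              (by linarith) (by linarith [hfr1 (((k : ℕ) : ℝ) * θ), hfr0 (((i : ℕ) : ℝ) * θ)])
            push_cast [Nat.cast_sub hik.le]
            simp only [Int.fract]
            ring
          have he : ((k : ℕ) - (i : ℕ)) + q < N := by have := k.isLt; omega
          have hefr : Int.fract (((((k : ℕ) - (i : ℕ)) + q : ℕ) : ℝ) * θ) =
              (Int.fract ((k : ℕ) * θ) - Int.fract ((i : ℕ) * θ)) +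
                Int.fract ((q : ℝ) * θ) := by
            refine tg_fract_eq
              (⌊(((k : ℕ) - (i : ℕ) : ℕ) : ℝ) * θ⌋ + ⌊(q : ℝ) * θ⌋) ?_
              (by linarith) (by linarith)
            have hexp := hdnfr
            push_cast
            simp only [Int.fract] at hexp ⊢
            linarith
          have h5 := hmax (((k : ℕ) - (i : ℕ)) + q) he
          rw [hefr] at h5
          linarith
      have hkey := key ((i : ℕ) - q) hc hgt hstar
      omega
  · -- case 3 : N - p ≤ i < q, successor is i + p - q
    intro h1 h2
    have hipq : N ≤ (i : ℕ) + p := by omega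
    have hiq' : Int.fract ((i : ℕ) * θ) < Int.fract ((q : ℝ) * θ) :=
      hmax' (i : ℕ) hiN (by omega)
    -- fract((q - i)θ) = fract(qθ) - fract(iθ) and minimality gives strict bound
    have hgsub : Int.fract (((q - (i : ℕ) : ℕ) : ℝ) * θ) =
        Int.fract ((q : ℝ) * θ) - Int.fract ((i : ℕ) * θ) := by
      refine tg_fract_eq (⌊(q : ℝ) * θ⌋ - ⌊((i : ℕ) : ℝ) * θ⌋) ?_
        (by linarith) (by linarith [hfr1 ((q : ℝ) * θ), hfr0 (((i : ℕ) : ℝ) * θ)])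
      push_cast [Nat.cast_sub h2.le]
      simp only [Int.fract]
      ring
    have hstrict : Int.fract ((p : ℝ) * θ) <
        Int.fract ((q : ℝ) * θ) - Int.fract ((i : ℕ) * θ) := by
      have h5 := hmin (q - (i : ℕ)) (by omega) (by omega)
      rw [hgsub] at h5
      rcases h5.lt_or_eq with h6 | h6
      · exact h6
      · exfalso
        have h7 : q - (i : ℕ) = p := hinj (by rw [hgsub, ← h6])
        omega
    have hc : (i : ℕ) + p - q < N := by omega
    have hcval : Int.fract (((((i : ℕ) + p - q : ℕ)) : ℝ) * θ) =
        Int.fract ((i : ℕ) * θ) + Int.fract ((p : ℝ) * θ) + 1 -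
          Int.fract ((q : ℝ) * θ) := by
      refine tg_fract_eq (⌊((i : ℕ) : ℝ) * θ⌋ + ⌊(p : ℝ) * θ⌋ - ⌊(q : ℝ) * θ⌋ - 1) ?_
        (by linarith [hfr1 ((q : ℝ) * θ), hfr0 (((i : ℕ) : ℝ) * θ), hfr0 ((p : ℝ) * θ)]) (by linarith)
      push_cast [Nat.cast_sub (show q ≤ (i : ℕ) + p by omega)]
      simp only [Int.fract]
      ring
    have hgt : Int.fract ((i : ℕ) * θ) <
        Int.fract (((((i : ℕ) + p - q : ℕ)) : ℝ) * θ) := by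
      rw [hcval]; linarith [hfr1 ((q : ℝ) * θ)]
    have hstar : ∀ k : Fin N, Int.fract ((i : ℕ) * θ) < Int.fract ((k : ℕ) * θ) →
        Int.fract (((((i : ℕ) + p - q : ℕ)) : ℝ) * θ) ≤ Int.fract ((k : ℕ) * θ) := by
      intro k hk
      by_contra hlt
      push_neg at hlt
      rw [hcval] at hlt
      rcases lt_trichotomy ((k : ℕ)) ((i : ℕ)) with hik | hik | hik
      · -- k < i : m = i - k ≤ i < q, fract(mθ) = 1 - δ
        have hmfr : Int.fract (((i - k : ℕ) : ℝ) * θ) =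
            1 - (Int.fract ((k : ℕ) * θ) - Int.fract ((i : ℕ) * θ)) := by
          refine tg_fract_eq (⌊((i : ℕ) : ℝ) * θ⌋ - ⌊((k : ℕ) : ℝ) * θ⌋ - 1) ?_
            (by linarith [hfr1 (((k : ℕ) : ℝ) * θ), hfr0 (((i : ℕ) : ℝ) * θ)])
            (by linarith)
          push_cast [Nat.cast_sub hik.le]
          simp only [Int.fract]
          ring
        -- f = q - m, fract(fθ) = fract(qθ) - fract(mθ) < fract(pθ)
        have hmlt : Int.fract (((i - k : ℕ) : ℝ) * θ) < Int.fract ((q : ℝ) * θ) :=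
          hmax' ((i : ℕ) - (k : ℕ)) (by omega) (by omega)
        have hffr : Int.fract (((q - ((i : ℕ) - (k : ℕ)) : ℕ) : ℝ) * θ) =
            Int.fract ((q : ℝ) * θ) - Int.fract ((((i : ℕ) - (k : ℕ) : ℕ) : ℝ) * θ) := by
          refine tg_fract_eq (⌊(q : ℝ) * θ⌋ - ⌊(((i : ℕ) - (k : ℕ) : ℕ) : ℝ) * θ⌋) ?_
            (by linarith) (by linarith [hfr1 ((q : ℝ) * θ), hfr0 ((((i : ℕ) - (k : ℕ) : ℕ) : ℝ) * θ)])
          push_cast [Nat.cast_sub (show (i : ℕ) - (k : ℕ) ≤ q by omega)]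
          simp only [Int.fract]
          ring
        have h5 := hmin (q - ((i : ℕ) - (k : ℕ))) (by omega) (by omega)
        rw [hffr, hmfr] at h5
        linarith
      · have hkk : ((k : ℕ) : ℝ) = ((i : ℕ) : ℝ) := by exact_mod_cast hik
        rw [hkk] at hk
        exact lt_irrefl _ hk
      · -- k > i : dn = k - i ≤ p - 1, f = p - dn
        have hdnle : (k : ℕ) - (i : ℕ) < p := by have := k.isLt; omega
        have hdnfr : Int.fract (((k - i : ℕ) : ℝ) * θ) =
            Int.fract ((k : ℕ) * θ) - Int.fract ((i : ℕ) * θ) := by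
          refine tg_fract_eq (⌊((k : ℕ) : ℝ) * θ⌋ - ⌊((i : ℕ) : ℝ) * θ⌋) ?_
            (by linarith) (by linarith [hfr1 (((k : ℕ) : ℝ) * θ), hfr0 (((i : ℕ) : ℝ) * θ)])
          push_cast [Nat.cast_sub hik.le]
          simp only [Int.fract]
          ring
        have hdnstrict : Int.fract ((p : ℝ) * θ) <
            Int.fract (((k - i : ℕ) : ℝ) * θ) := by
          have h5 := hmin ((k : ℕ) - (i : ℕ)) (by omega) (by omega)
          rcases h5.lt_or_eq with h6 | h6
          · exact h6
          · exact absurd (hinj h6.symm) (by omega)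
        have hffr : Int.fract (((p - ((k : ℕ) - (i : ℕ)) : ℕ) : ℝ) * θ) =
            Int.fract ((p : ℝ) * θ) + 1 -
              Int.fract ((((k : ℕ) - (i : ℕ) : ℕ) : ℝ) * θ) := by
          refine tg_fract_eq (⌊(p : ℝ) * θ⌋ - ⌊(((k : ℕ) - (i : ℕ) : ℕ) : ℝ) * θ⌋ - 1) ?_
            (by linarith [hfr1 ((((k : ℕ) - (i : ℕ) : ℕ) : ℝ) * θ)])
            (by linarith)
          push_cast [Nat.cast_sub hdnle.le]
          simp only [Int.fract]
          ring
        have h5 := hmax (p - ((k : ℕ) - (i : ℕ))) (by omega)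
        rw [hffr, hdnfr] at h5
        linarith
    have hkey := key ((i : ℕ) + p - q) hc hgt hstar
    omega
end

section
/- Any connected circulant graph C_N({c_1, c_2}) (with gcd conditions ensuring connectedness, i.e. gcd(c_1, c_2, N) = 1) can be embedded into the torus, i.e. has genus at most 1. -/
/-- A graph `G` embeds into a topological space `X` if its vertices can be
realized as distinct points of `X` and its edges as arcs (injective continuous
paths) joining the endpoints, such that arcs meet vertices only at their
endpoints and two arcs of distinct edges meet only at common vertices. -/
def GraphEmbedsIn {V : Type*} (G : SimpleGraph V) (X : Type*)
    [TopologicalSpace X] : Prop :=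
  ∃ (f : V → X) (γ : V → V → unitInterval → X),
    Function.Injective f ∧
    (∀ u v, G.Adj u v → Continuous (γ u v)) ∧
    (∀ u v, G.Adj u v → Function.Injective (γ u v)) ∧
    (∀ u v, G.Adj u v → γ u v 0 = f u ∧ γ u v 1 = f v) ∧
    (∀ u v, G.Adj u v → ∀ w, f w ∈ Set.range (γ u v) → w = u ∨ w = v) ∧
    (∀ u v u' v', G.Adj u v → G.Adj u' v' → s(u, v) ≠ s(u', v') →
      ∀ x ∈ Set.range (γ u v) ∩ Set.range (γ u' v'), x ∈ Set.range f)

/-- The torus, as the product of two circles. -/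
abbrev Torus : Type := AddCircle (1 : ℝ) × AddCircle (1 : ℝ)

/-- The circulant graph on `ZMod N` with connection set `{±c₁, ±c₂}`. -/
def circulantTwo (N : ℕ) (c₁ c₂ : ℕ) : SimpleGraph (ZMod N) :=
  SimpleGraph.fromRel fun v w => w - v = (c₁ : ZMod N) ∨ w - v = (c₂ : ZMod N)

namespace CirculantTorusAux

lemma coeEq (a b : ℝ) : (↑a : AddCircle (1:ℝ)) = ↑b ↔ ∃ k : ℤ, a - b = k := by
  constructor
  · intro h
    obtain ⟨k, hk⟩ := AddSubgroup.mem_zmultiples_iff.mp (QuotientAddGroup.eq.mp h)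
    rw [zsmul_eq_mul, mul_one] at hk
    exact ⟨-k, by push_cast; linarith⟩
  · rintro ⟨k, hk⟩
    apply QuotientAddGroup.eq.mpr
    rw [AddSubgroup.mem_zmultiples_iff]
    exact ⟨-k, by rw [zsmul_eq_mul, mul_one]; push_cast; linarith⟩

noncomputable def psi (D N : ℕ) (b0 : ℤ) (a b : ℝ) : Torus :=
  (((a / D : ℝ) : AddCircle (1:ℝ)), (((D * b - b0 * a) / N : ℝ) : AddCircle (1:ℝ)))

lemma psi_cont (D N : ℕ) (b0 : ℤ) : Continuous (fun p : ℝ × ℝ => psi D N b0 p.1 p.2) := by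
  unfold psi
  exact Continuous.prodMk (continuous_quotient_mk'.comp (by fun_prop))
    (continuous_quotient_mk'.comp (by fun_prop))

lemma psi_eq_iff {D N m : ℕ} (hD : 0 < D) (hm : N = D * m) (hmpos : 0 < m) (b0 : ℤ)
    (a b a' b' : ℝ) :
    psi D N b0 a b = psi D N b0 a' b' ↔
      ∃ j k : ℤ, a - a' = D * j ∧ b - b' = b0 * j + m * k := by
  have hD' : (D:ℝ) ≠ 0 := by positivity
  have hN0 : 0 < N := hm ▸ Nat.mul_pos hD hmpos
  have hN' : (N:ℝ) ≠ 0 := by positivity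
  have hNm : (N:ℝ) = D * m := by rw [hm]; push_cast; ring
  rw [psi, psi, Prod.ext_iff]
  simp only [coeEq]
  constructor
  · rintro ⟨⟨j, hj⟩, ⟨k, hk⟩⟩
    have h1 : a - a' = D * j := by field_simp at hj; linarith
    refine ⟨j, k, h1, ?_⟩
    rw [div_sub_div_same, div_eq_iff hN', hNm] at hk
    have h2 : (D:ℝ) * (b - b') = D * (b0*j + m*k) := by linear_combination hk + (b0:ℝ) * h1
    exact mul_left_cancel₀ hD' h2
  · rintro ⟨j, k, h1, h2⟩
    refine ⟨⟨j, by field_simp; linarith⟩, ⟨k, ?_⟩⟩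
    rw [div_sub_div_same, div_eq_iff hN', hNm]
    linear_combination (D:ℝ) * h2 - (b0:ℝ) * h1

lemma dvd_char {N c1 c2 : ℕ} (hN : 0 < N) (hgcd : Nat.gcd (Nat.gcd c1 c2) N = 1)
    {b0 : ℤ} (hb0 : (N:ℤ) ∣ c1 * (Nat.gcd c2 N) + c2 * b0) (α β : ℤ) :
    (∃ j k : ℤ, α = (Nat.gcd c2 N) * j ∧ β = b0 * j + ((N / Nat.gcd c2 N : ℕ)) * k) ↔
      (N:ℤ) ∣ c1 * α + c2 * β := by
  set D := Nat.gcd c2 N with hDdef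
  have hD : 0 < D := Nat.gcd_pos_of_pos_right _ hN
  set e := c2 / D with hedef
  set m := N / D with hmdef
  have he' : D * e = c2 := Nat.mul_div_cancel' (Nat.gcd_dvd_left c2 N)
  have hm' : D * m = N := Nat.mul_div_cancel' (Nat.gcd_dvd_right c2 N)
  have hc2 : (c2:ℤ) = D * e := by exact_mod_cast he'.symm
  have hNm : (N:ℤ) = D * m := by exact_mod_cast hm'.symm
  have hcop_em : IsCoprime (m:ℤ) (e:ℤ) := by
    rw [Int.isCoprime_iff_gcd_eq_one]
    exact_mod_cast Nat.Coprime.symm (Nat.coprime_div_gcd_div_gcd hD)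
  have hcop_c1D : IsCoprime (D:ℤ) (c1:ℤ) := by
    rw [Int.isCoprime_iff_gcd_eq_one]
    have : Nat.gcd c1 D = 1 := by rw [hDdef, ← Nat.gcd_assoc]; exact hgcd
    simpa [Nat.gcd_comm] using this
  have hDN : (D:ℤ) ∣ (N:ℤ) := ⟨m, hNm⟩
  have hDc2 : (D:ℤ) ∣ (c2:ℤ) := ⟨e, hc2⟩
  constructor
  · rintro ⟨j, k, rfl, rfl⟩
    have heq : (c1:ℤ)*(D*j) + c2*(b0*j + m*k) = j*(c1*D + c2*b0) + (e*k)*N := by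
      rw [hc2, hNm]; ring
    rw [heq]
    exact dvd_add (Dvd.dvd.mul_left hb0 j) (Dvd.intro_left _ rfl)
  · intro h
    have hDα : (D:ℤ) ∣ α := by
      have h1 : (D:ℤ) ∣ c1 * α := by
        have h2 : (D:ℤ) ∣ c1 * α + c2 * β := dvd_trans hDN h
        have h3 : (D:ℤ) ∣ c2 * β := hDc2.mul_right β
        have h4 : (c1:ℤ) * α = (c1 * α + c2 * β) - c2 * β := by ring
        rw [h4]; exact dvd_sub h2 h3
      exact hcop_c1D.dvd_of_dvd_mul_left h1
    obtain ⟨j, hj⟩ := hDα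
    have h4 : (N:ℤ) ∣ c2 * (β - b0 * j) := by
      have h5 : (N:ℤ) ∣ (c1 * α + c2 * β) - j * (c1 * D + c2 * b0) :=
        dvd_sub h (hb0.mul_left j)
      have h6 : (c1:ℤ) * α + c2 * β - j * (c1 * D + c2 * b0) = c2 * (β - b0 * j) := by
        rw [hj]; ring
      rwa [h6] at h5
    have h7 : (m:ℤ) ∣ β - b0 * j := by
      rw [hc2, hNm, mul_assoc] at h4
      have h8 : (m:ℤ) ∣ e * (β - b0 * j) :=
        (mul_dvd_mul_iff_left (by exact_mod_cast hD.ne' : (D:ℤ) ≠ 0)).mp h4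
      exact hcop_em.dvd_of_dvd_mul_left h8
    obtain ⟨k, hk⟩ := h7
    exact ⟨j, k, hj, by linear_combination hk⟩

lemma exists_b0 (N c1 c2 : ℕ) : ∃ b0 : ℤ, (N:ℤ) ∣ c1 * (Nat.gcd c2 N) + c2 * b0 := by
  refine ⟨-c1 * Int.gcdA c2 N, ⟨c1 * Int.gcdB c2 N, ?_⟩⟩
  have h := Int.gcd_eq_gcd_ab (c2:ℤ) (N:ℤ)
  have h2 : (Nat.gcd c2 N : ℤ) = c2 * Int.gcdA c2 N + N * Int.gcdB c2 N := by
    rw [← h]; simp [Int.gcd]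
  rw [h2]; ring

lemma exists_xy {N c1 c2 : ℕ} (hN : 0 < N) (hgcd : Nat.gcd (Nat.gcd c1 c2) N = 1) :
    ∃ x y : ℤ, ((c1 * x + c2 * y : ℤ) : ZMod N) = 1 := by
  have h1 : (Nat.gcd c1 c2 : ℤ) = c1 * Int.gcdA c1 c2 + c2 * Int.gcdB c1 c2 := by
    have := Int.gcd_eq_gcd_ab (c1:ℤ) (c2:ℤ)
    rwa [Int.gcd_natCast_natCast] at this
  have h2 : ((Nat.gcd c1 c2 : ℕ) : ℤ) * Int.gcdA (Nat.gcd c1 c2) N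
      + N * Int.gcdB (Nat.gcd c1 c2) N = 1 := by
    have h := Int.gcd_eq_gcd_ab ((Nat.gcd c1 c2 : ℕ) : ℤ) (N:ℤ)
    rw [Int.gcd_natCast_natCast, hgcd] at h
    exact_mod_cast h.symm
  set s := Int.gcdA (Nat.gcd c1 c2) N
  set t := Int.gcdB (Nat.gcd c1 c2) N
  refine ⟨Int.gcdA c1 c2 * s, Int.gcdB c1 c2 * s, ?_⟩
  have h3 : (c1 * (Int.gcdA c1 c2 * s) + c2 * (Int.gcdB c1 c2 * s) : ℤ) = 1 - N * t := by
    have : ((Nat.gcd c1 c2 : ℕ) : ℤ) * s = 1 - N * t := by linarith [h2]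
    calc (c1 * (Int.gcdA c1 c2 * s) + c2 * (Int.gcdB c1 c2 * s) : ℤ)
        = (c1 * Int.gcdA c1 c2 + c2 * Int.gcdB c1 c2) * s := by ring
      _ = ((Nat.gcd c1 c2 : ℕ) : ℤ) * s := by rw [← h1]
      _ = 1 - N * t := this
  rw [h3]
  push_cast
  simp [ZMod.natCast_self]

lemma int_param_cases {t s : ℝ} {d : ℤ} (h : t - s = d) (ht0 : 0 ≤ t) (ht1 : t ≤ 1)
    (hs0 : 0 ≤ s) (hs1 : s ≤ 1) :
    t = s ∨ (t = 1 ∧ s = 0) ∨ (s = 1 ∧ t = 0) := by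
  have hdl : (-1:ℤ) ≤ d := by
    have : (-1:ℝ) ≤ (d:ℝ) := by rw [← h]; linarith
    exact_mod_cast this
  have hdu : d ≤ 1 := by
    have : (d:ℝ) ≤ 1 := by rw [← h]; linarith
    exact_mod_cast this
  have : d = -1 ∨ d = 0 ∨ d = 1 := by omega
  rcases this with rfl | rfl | rfl
  · push_cast at h
    right; right; constructor <;> linarith
  · push_cast at h
    left; linarith
  · push_cast at h
    right; left; constructor <;> linarith

lemma int_param01 {t : ℝ} {d : ℤ} (h : t = d) (ht0 : 0 ≤ t) (ht1 : t ≤ 1) :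
    t = 0 ∨ t = 1 := by
  have hdl : (0:ℤ) ≤ d := by
    have : (0:ℝ) ≤ (d:ℝ) := by rw [← h]; linarith
    exact_mod_cast this
  have hdu : d ≤ 1 := by
    have : (d:ℝ) ≤ 1 := by rw [← h]; linarith
    exact_mod_cast this
  have : d = 0 ∨ d = 1 := by omega
  rcases this with rfl | rfl
  · left; rw [h]; norm_num
  · right; rw [h]; norm_num

end CirculantTorusAux

set_option maxHeartbeats 2000000 in
open CirculantTorusAux in
/-- Any connected circulant graph `C_N({c₁, c₂})` (connectedness being
guaranteed by `gcd(c₁, c₂, N) = 1`) embeds into the torus. -/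
theorem circulant_embeds_in_torus (N c₁ c₂ : ℕ) (hN : 0 < N)
    (hgcd : Nat.gcd (Nat.gcd c₁ c₂) N = 1) :
    GraphEmbedsIn (circulantTwo N c₁ c₂) Torus := by
  classical
  haveI : NeZero N := ⟨hN.ne'⟩
  set D := Nat.gcd c₂ N with hDdef
  have hD : 0 < D := Nat.gcd_pos_of_pos_right _ hN
  set m := N / D with hmdef
  have hm' : N = D * m := (Nat.mul_div_cancel' (Nat.gcd_dvd_right c₂ N)).symm
  have hmpos : 0 < m := Nat.div_pos (Nat.le_of_dvd hN (Nat.gcd_dvd_right c₂ N)) hD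
  obtain ⟨b0, hb0⟩ := exists_b0 N c₁ c₂
  obtain ⟨x, y, hxy⟩ := exists_xy hN hgcd
  set Ψ : ℝ → ℝ → Torus := psi D N b0 with hΨdef
  set L1 : ZMod N → ℤ := fun v => x * (v.val : ℤ) with hL1def
  set L2 : ZMod N → ℤ := fun v => y * (v.val : ℤ) with hL2def
  set f : ZMod N → Torus := fun v => Ψ (L1 v) (L2 v) with hfdef
  have hreal : ∀ a b a' b' : ℝ, Ψ a b = Ψ a' b' ↔
      ∃ j k : ℤ, a - a' = D * j ∧ b - b' = b0 * j + m * k :=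
    psi_eq_iff hD hm' hmpos b0
  -- integer version
  have hint : ∀ A B A' B' : ℤ, Ψ (A:ℝ) (B:ℝ) = Ψ (A':ℝ) (B':ℝ) ↔
      ((c₁ * A + c₂ * B : ℤ) : ZMod N) = ((c₁ * A' + c₂ * B' : ℤ) : ZMod N) := by
    intro A B A' B'
    rw [hreal, ZMod.intCast_eq_intCast_iff, Int.modEq_iff_dvd]
    have h1 : (c₁ * A' + c₂ * B' - (c₁ * A + c₂ * B) : ℤ)
        = c₁ * (A' - A) + c₂ * (B' - B) := by ring
    rw [h1, ← dvd_char hN hgcd hb0]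
    simp only [← hDdef]
    simp only [← hmdef]
    constructor
    · rintro ⟨j, k, h2, h3⟩
      refine ⟨-j, -k, ?_, ?_⟩
      · have h2' : (A':ℝ) - A = (D:ℝ) * ((-j : ℤ) : ℝ) := by push_cast; linarith
        exact_mod_cast h2'
      · have h3' : (B':ℝ) - B = (b0:ℝ) * ((-j:ℤ):ℝ) + (m:ℝ) * ((-k:ℤ):ℝ) := by
          push_cast; linarith
        exact_mod_cast h3'
    · rintro ⟨j, k, h2, h3⟩
      refine ⟨-j, -k, ?_, ?_⟩
      · have h2' := congrArg (Int.cast : ℤ → ℝ) h2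
        push_cast at h2' ⊢
        linarith
      · have h3' := congrArg (Int.cast : ℤ → ℝ) h3
        push_cast at h3' ⊢
        linarith
  have hPi : ∀ v : ZMod N, ((c₁ * L1 v + c₂ * L2 v : ℤ) : ZMod N) = v := by
    intro v
    have h1 : (c₁ * L1 v + c₂ * L2 v : ℤ) = (c₁ * x + c₂ * y) * (v.val : ℤ) := by
      rw [hL1def, hL2def]; ring
    rw [h1]
    push_cast [hxy]
    rw [one_mul, ZMod.natCast_val, ZMod.cast_id]
  have hfeq : ∀ z z' : ZMod N, f z = f z' ↔ z = z' := by
    intro z z'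
    rw [hfdef]
    simp only []
    rw [hint, hPi, hPi]
  have hshift : ∀ (z : ZMod N) (a b : ℤ),
      Ψ ((L1 z : ℝ) + (a:ℤ)) ((L2 z : ℝ) + (b:ℤ)) = f (z + a * c₁ + b * c₂) := by
    intro z a b
    have h1 : ((L1 z : ℝ) + (a:ℤ)) = ((L1 z + a : ℤ) : ℝ) := by push_cast; ring
    have h2 : ((L2 z : ℝ) + (b:ℤ)) = ((L2 z + b : ℤ) : ℝ) := by push_cast; ring
    rw [h1, h2, hfdef]
    simp only []
    rw [hint]
    have h3 : ((c₁ * (L1 z + a) + c₂ * (L2 z + b) : ℤ) : ZMod N)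
        = ((c₁ * L1 z + c₂ * L2 z : ℤ) : ZMod N) + (a:ℤ) * (c₁:ℕ) + (b:ℤ) * (c₂:ℕ) := by
      push_cast; ring
    rw [h3, hPi, hPi]
  -- arcs with real parameter
  set Gh : ZMod N → ℝ → Torus := fun w t => Ψ ((L1 w : ℝ) + t) ((L2 w : ℝ)) with hGhdef
  set Gv : ZMod N → ℝ → Torus := fun w t => Ψ ((L1 w : ℝ)) ((L2 w : ℝ) + t) with hGvdef
  have hGh0 : ∀ w, Gh w 0 = f w := by
    intro w
    simp only [hGhdef, hfdef]
    norm_num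
  have hGh1 : ∀ w, Gh w 1 = f (w + (c₁ : ZMod N)) := by
    intro w
    simp only [hGhdef]
    simpa using hshift w 1 0
  have hGv0 : ∀ w, Gv w 0 = f w := by
    intro w
    simp only [hGvdef, hfdef]
    norm_num
  have hGv1 : ∀ w, Gv w 1 = f (w + (c₂ : ZMod N)) := by
    intro w
    simp only [hGvdef]
    simpa using hshift w 0 1
  have hGhc : ∀ w, Continuous (Gh w) := by
    intro w
    simp only [hGhdef]
    exact (psi_cont _ _ _).comp
      (Continuous.prodMk (continuous_const.add continuous_id) continuous_const)
  have hGvc : ∀ w, Continuous (Gv w) := by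
    intro w
    simp only [hGvdef]
    exact (psi_cont _ _ _).comp
      (Continuous.prodMk continuous_const (continuous_const.add continuous_id))
  -- injectivity of arcs
  have hGhinj : ∀ w, (c₁ : ZMod N) ≠ 0 → ∀ t s : ℝ, 0 ≤ t → t ≤ 1 → 0 ≤ s → s ≤ 1 →
      Gh w t = Gh w s → t = s := by
    intro w hc t s ht0 ht1 hs0 hs1 h
    have h' := h
    simp only [hGhdef] at h
    rw [hreal] at h
    obtain ⟨j, k, h1, h2⟩ := h
    have hd : t - s = (((D : ℤ) * j : ℤ) : ℝ) := by push_cast; linarith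
    rcases int_param_cases hd ht0 ht1 hs0 hs1 with he | ⟨he1, he2⟩ | ⟨he1, he2⟩
    · exact he
    · exfalso
      rw [he1, he2, hGh1, hGh0] at h'
      exact hc (add_eq_left.mp ((hfeq _ _).mp h'))
    · exfalso
      rw [he1, he2, hGh0, hGh1] at h'
      exact hc (add_eq_left.mp ((hfeq _ _).mp h'.symm))
  have hGvinj : ∀ w, (c₂ : ZMod N) ≠ 0 → ∀ t s : ℝ, 0 ≤ t → t ≤ 1 → 0 ≤ s → s ≤ 1 →
      Gv w t = Gv w s → t = s := by
    intro w hc t s ht0 ht1 hs0 hs1 h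
    have h' := h
    simp only [hGvdef] at h
    rw [hreal] at h
    obtain ⟨j, k, h1, h2⟩ := h
    have hd : t - s = ((b0 * j + (m : ℤ) * k : ℤ) : ℝ) := by
      push_cast; linarith
    rcases int_param_cases hd ht0 ht1 hs0 hs1 with he | ⟨he1, he2⟩ | ⟨he1, he2⟩
    · exact he
    · exfalso
      rw [he1, he2, hGv1, hGv0] at h'
      exact hc (add_eq_left.mp ((hfeq _ _).mp h'))
    · exfalso
      rw [he1, he2, hGv0, hGv1] at h'
      exact hc (add_eq_left.mp ((hfeq _ _).mp h'.symm))
  -- vertices on arcs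
  have hGhvtx : ∀ w z, ∀ t : ℝ, 0 ≤ t → t ≤ 1 → f z = Gh w t →
      z = w ∨ z = w + (c₁ : ZMod N) := by
    intro w z t ht0 ht1 h
    have h' := h
    simp only [hGhdef, hfdef] at h
    rw [hreal] at h
    obtain ⟨j, k, h1, h2⟩ := h
    have hd : t = ((L1 z - L1 w - (D : ℤ) * j : ℤ) : ℝ) := by push_cast; linarith
    rcases int_param01 hd ht0 ht1 with he | he
    · rw [he, hGh0] at h'
      exact Or.inl ((hfeq _ _).mp h'.symm).symm
    · rw [he, hGh1] at h'
      exact Or.inr ((hfeq _ _).mp h'.symm).symm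
  have hGvvtx : ∀ w z, ∀ t : ℝ, 0 ≤ t → t ≤ 1 → f z = Gv w t →
      z = w ∨ z = w + (c₂ : ZMod N) := by
    intro w z t ht0 ht1 h
    have h' := h
    simp only [hGvdef, hfdef] at h
    rw [hreal] at h
    obtain ⟨j, k, h1, h2⟩ := h
    have hd : t = ((L2 z - L2 w - b0 * j - (m : ℤ) * k : ℤ) : ℝ) := by
      push_cast; linarith
    rcases int_param01 hd ht0 ht1 with he | he
    · rw [he, hGv0] at h'
      exact Or.inl ((hfeq _ _).mp h'.symm).symm
    · rw [he, hGv1] at h'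
      exact Or.inr ((hfeq _ _).mp h'.symm).symm
  -- crossing lemmas
  have hcross_hh : ∀ w w', s(w, w + (c₁ : ZMod N)) ≠ s(w', w' + (c₁ : ZMod N)) →
      ∀ t s : ℝ, 0 ≤ t → t ≤ 1 → 0 ≤ s → s ≤ 1 → Gh w t = Gh w' s →
      Gh w t ∈ Set.range f := by
    intro w w' hne t s ht0 ht1 hs0 hs1 h
    have h' := h
    simp only [hGhdef] at h
    rw [hreal] at h
    obtain ⟨j, k, h1, h2⟩ := h
    have hd : t - s = (((D : ℤ) * j - L1 w + L1 w' : ℤ) : ℝ) := by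
      push_cast; linarith
    rcases int_param_cases hd ht0 ht1 hs0 hs1 with he | ⟨he1, he2⟩ | ⟨he1, he2⟩
    · exfalso
      apply hne
      have hww : w = w' := by
        apply (hfeq _ _).mp
        simp only [hfdef]
        rw [hreal]
        refine ⟨j, k, ?_, ?_⟩
        · push_cast
          rw [he] at h1
          linarith
        · linarith
      rw [hww]
    · rw [he1, hGh1]
      exact ⟨_, rfl⟩
    · rw [he2, hGh0]
      exact ⟨_, rfl⟩
  have hcross_vv : ∀ w w', s(w, w + (c₂ : ZMod N)) ≠ s(w', w' + (c₂ : ZMod N)) →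
      ∀ t s : ℝ, 0 ≤ t → t ≤ 1 → 0 ≤ s → s ≤ 1 → Gv w t = Gv w' s →
      Gv w t ∈ Set.range f := by
    intro w w' hne t s ht0 ht1 hs0 hs1 h
    have h' := h
    simp only [hGvdef] at h
    rw [hreal] at h
    obtain ⟨j, k, h1, h2⟩ := h
    have hd : t - s = ((b0 * j + (m : ℤ) * k - L2 w + L2 w' : ℤ) : ℝ) := by
      push_cast; linarith
    rcases int_param_cases hd ht0 ht1 hs0 hs1 with he | ⟨he1, he2⟩ | ⟨he1, he2⟩
    · exfalso
      apply hne
      have hww : w = w' := by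
        apply (hfeq _ _).mp
        simp only [hfdef]
        rw [hreal]
        refine ⟨j, k, ?_, ?_⟩
        · linarith
        · push_cast
          rw [he] at h2
          linarith
      rw [hww]
    · rw [he1, hGv1]
      exact ⟨_, rfl⟩
    · rw [he2, hGv0]
      exact ⟨_, rfl⟩
  have hcross_hv : ∀ w w', ∀ t s : ℝ, 0 ≤ t → t ≤ 1 → Gh w t = Gv w' s →
      Gh w t ∈ Set.range f := by
    intro w w' t s ht0 ht1 h
    simp only [hGhdef, hGvdef] at h
    rw [hreal] at h
    obtain ⟨j, k, h1, h2⟩ := h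
    have hd : t = (((D : ℤ) * j - L1 w + L1 w' : ℤ) : ℝ) := by
      push_cast; linarith
    rcases int_param01 hd ht0 ht1 with he | he
    · rw [he, hGh0]
      exact ⟨_, rfl⟩
    · rw [he, hGh1]
      exact ⟨_, rfl⟩
  -- the case analysis for adjacency
  have hcases : ∀ u v : ZMod N, (circulantTwo N c₁ c₂).Adj u v →
      (v - u = (c₁ : ZMod N)) ∨ (v - u ≠ (c₁ : ZMod N) ∧ u - v = (c₁ : ZMod N)) ∨
      (v - u ≠ (c₁ : ZMod N) ∧ u - v ≠ (c₁ : ZMod N) ∧ v - u = (c₂ : ZMod N)) ∨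
      (v - u ≠ (c₁ : ZMod N) ∧ u - v ≠ (c₁ : ZMod N) ∧ v - u ≠ (c₂ : ZMod N) ∧
        u - v = (c₂ : ZMod N)) := by
    intro u v h
    rw [circulantTwo, SimpleGraph.fromRel_adj] at h
    tauto
  -- the arc system
  set γ : ZMod N → ZMod N → unitInterval → Torus := fun u v t =>
      if v - u = (c₁ : ZMod N) then Gh u ↑t
      else if u - v = (c₁ : ZMod N) then Gh v (1 - ↑t)
      else if v - u = (c₂ : ZMod N) then Gv u ↑t
      else Gv v (1 - ↑t) with hγdef
  have hγc1 : ∀ u v (t : unitInterval), v - u = (c₁ : ZMod N) → γ u v t = Gh u ↑t := by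
    intro u v t h
    simp only [hγdef]
    rw [if_pos h]
  have hγc2 : ∀ u v (t : unitInterval), v - u ≠ (c₁ : ZMod N) → u - v = (c₁ : ZMod N) →
      γ u v t = Gh v (1 - ↑t) := by
    intro u v t h1 h2
    simp only [hγdef]
    rw [if_neg h1, if_pos h2]
  have hγc3 : ∀ u v (t : unitInterval), v - u ≠ (c₁ : ZMod N) → u - v ≠ (c₁ : ZMod N) →
      v - u = (c₂ : ZMod N) → γ u v t = Gv u ↑t := by
    intro u v t h1 h2 h3
    simp only [hγdef]
    rw [if_neg h1, if_neg h2, if_pos h3]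
  have hγc4 : ∀ u v (t : unitInterval), v - u ≠ (c₁ : ZMod N) → u - v ≠ (c₁ : ZMod N) →
      v - u ≠ (c₂ : ZMod N) → γ u v t = Gv v (1 - ↑t) := by
    intro u v t h1 h2 h3
    simp only [hγdef]
    rw [if_neg h1, if_neg h2, if_neg h3]
  -- range characterization
  have hrange : ∀ u v, (circulantTwo N c₁ c₂).Adj u v → ∃ w : ZMod N,
      (s(u, v) = s(w, w + (c₁ : ZMod N)) ∧
        ∀ p ∈ Set.range (γ u v), ∃ t : ℝ, 0 ≤ t ∧ t ≤ 1 ∧ p = Gh w t) ∨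
      (s(u, v) = s(w, w + (c₂ : ZMod N)) ∧
        ∀ p ∈ Set.range (γ u v), ∃ t : ℝ, 0 ≤ t ∧ t ≤ 1 ∧ p = Gv w t) := by
    intro u v hadj
    rcases hcases u v hadj with h | ⟨h1, h2⟩ | ⟨h1, h2, h3⟩ | ⟨h1, h2, h3, h4⟩
    · refine ⟨u, Or.inl ⟨?_, ?_⟩⟩
      · rw [sub_eq_iff_eq_add'.mp h]
      · rintro p ⟨t, rfl⟩
        exact ⟨↑t, t.2.1, t.2.2, hγc1 u v t h⟩
    · refine ⟨v, Or.inl ⟨?_, ?_⟩⟩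
      · rw [sub_eq_iff_eq_add'.mp h2]
        exact Sym2.eq_swap
      · rintro p ⟨t, rfl⟩
        exact ⟨1 - ↑t, by linarith [t.2.2], by linarith [t.2.1], hγc2 u v t h1 h2⟩
    · refine ⟨u, Or.inr ⟨?_, ?_⟩⟩
      · rw [sub_eq_iff_eq_add'.mp h3]
      · rintro p ⟨t, rfl⟩
        exact ⟨↑t, t.2.1, t.2.2, hγc3 u v t h1 h2 h3⟩
    · refine ⟨v, Or.inr ⟨?_, ?_⟩⟩
      · rw [sub_eq_iff_eq_add'.mp h4]
        exact Sym2.eq_swap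
      · rintro p ⟨t, rfl⟩
        exact ⟨1 - ↑t, by linarith [t.2.2], by linarith [t.2.1], hγc4 u v t h1 h2 h3⟩
  refine ⟨f, γ, ?_, ?_, ?_, ?_, ?_, ?_⟩
  · -- injectivity of f
    intro z z' h
    exact (hfeq z z').mp h
  · -- continuity
    intro u v hadj
    rcases hcases u v hadj with h | ⟨h1, h2⟩ | ⟨h1, h2, h3⟩ | ⟨h1, h2, h3, h4⟩
    · have he : γ u v = fun t : unitInterval => Gh u ↑t := funext fun t => hγc1 u v t h
      rw [he]
      exact (hGhc u).comp continuous_subtype_val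
    · have he : γ u v = fun t : unitInterval => Gh v (1 - ↑t) := funext fun t => hγc2 u v t h1 h2
      rw [he]
      exact (hGhc v).comp (continuous_const.sub continuous_subtype_val)
    · have he : γ u v = fun t : unitInterval => Gv u ↑t := funext fun t => hγc3 u v t h1 h2 h3
      rw [he]
      exact (hGvc u).comp continuous_subtype_val
    · have he : γ u v = fun t : unitInterval => Gv v (1 - ↑t) :=
        funext fun t => hγc4 u v t h1 h2 h3
      rw [he]
      exact (hGvc v).comp (continuous_const.sub continuous_subtype_val)
  · -- injectivity of arcs
    intro u v hadj
    rcases hcases u v hadj with h | ⟨h1, h2⟩ | ⟨h1, h2, h3⟩ | ⟨h1, h2, h3, h4⟩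
    · have hc0 : (c₁ : ZMod N) ≠ 0 := by
        intro h0
        apply hadj.ne
        rw [sub_eq_iff_eq_add'.mp h, h0, add_zero]
      intro t s hts
      rw [hγc1 u v t h, hγc1 u v s h] at hts
      exact Subtype.ext (hGhinj u hc0 ↑t ↑s t.2.1 t.2.2 s.2.1 s.2.2 hts)
    · have hc0 : (c₁ : ZMod N) ≠ 0 := by
        intro h0
        apply hadj.ne'
        rw [sub_eq_iff_eq_add'.mp h2, h0, add_zero]
      intro t s hts
      rw [hγc2 u v t h1 h2, hγc2 u v s h1 h2] at hts
      have := hGhinj v hc0 (1 - ↑t) (1 - ↑s) (by linarith [t.2.2]) (by linarith [t.2.1])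
        (by linarith [s.2.2]) (by linarith [s.2.1]) hts
      exact Subtype.ext (by linarith)
    · have hc0 : (c₂ : ZMod N) ≠ 0 := by
        intro h0
        apply hadj.ne
        rw [sub_eq_iff_eq_add'.mp h3, h0, add_zero]
      intro t s hts
      rw [hγc3 u v t h1 h2 h3, hγc3 u v s h1 h2 h3] at hts
      exact Subtype.ext (hGvinj u hc0 ↑t ↑s t.2.1 t.2.2 s.2.1 s.2.2 hts)
    · have hc0 : (c₂ : ZMod N) ≠ 0 := by
        intro h0
        apply hadj.ne'
        rw [sub_eq_iff_eq_add'.mp h4, h0, add_zero]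
      intro t s hts
      rw [hγc4 u v t h1 h2 h3, hγc4 u v s h1 h2 h3] at hts
      have := hGvinj v hc0 (1 - ↑t) (1 - ↑s) (by linarith [t.2.2]) (by linarith [t.2.1])
        (by linarith [s.2.2]) (by linarith [s.2.1]) hts
      exact Subtype.ext (by linarith)
  · -- endpoints
    intro u v hadj
    rcases hcases u v hadj with h | ⟨h1, h2⟩ | ⟨h1, h2, h3⟩ | ⟨h1, h2, h3, h4⟩
    · constructor
      · rw [hγc1 u v 0 h]
        have he : ((0 : unitInterval) : ℝ) = 0 := rfl
        rw [he, hGh0]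
      · rw [hγc1 u v 1 h]
        have he : ((1 : unitInterval) : ℝ) = 1 := rfl
        rw [he, hGh1, ← sub_eq_iff_eq_add'.mp h]
    · constructor
      · rw [hγc2 u v 0 h1 h2]
        have he : (1 - ((0 : unitInterval) : ℝ)) = 1 := by norm_num
        rw [he, hGh1, ← sub_eq_iff_eq_add'.mp h2]
      · rw [hγc2 u v 1 h1 h2]
        have he : (1 - ((1 : unitInterval) : ℝ)) = 0 := by norm_num
        rw [he, hGh0]
    · constructor
      · rw [hγc3 u v 0 h1 h2 h3]
        have he : ((0 : unitInterval) : ℝ) = 0 := rfl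
        rw [he, hGv0]
      · rw [hγc3 u v 1 h1 h2 h3]
        have he : ((1 : unitInterval) : ℝ) = 1 := rfl
        rw [he, hGv1, ← sub_eq_iff_eq_add'.mp h3]
    · constructor
      · rw [hγc4 u v 0 h1 h2 h3]
        have he : (1 - ((0 : unitInterval) : ℝ)) = 1 := by norm_num
        rw [he, hGv1, ← sub_eq_iff_eq_add'.mp h4]
      · rw [hγc4 u v 1 h1 h2 h3]
        have he : (1 - ((1 : unitInterval) : ℝ)) = 0 := by norm_num
        rw [he, hGv0]
  · -- vertices meet arcs only at endpoints
    intro u v hadj z hz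
    obtain ⟨w, hw | hw⟩ := hrange u v hadj
    · obtain ⟨hs, hr⟩ := hw
      obtain ⟨t, ht0, ht1, hp⟩ := hr _ hz
      have hzz := hGhvtx w z t ht0 ht1 hp
      rcases Sym2.eq_iff.mp hs with ⟨hA, hB⟩ | ⟨hA, hB⟩
      · rw [hA, hB]
        exact hzz
      · rw [hA, hB]
        exact hzz.symm
    · obtain ⟨hs, hr⟩ := hw
      obtain ⟨t, ht0, ht1, hp⟩ := hr _ hz
      have hzz := hGvvtx w z t ht0 ht1 hp
      rcases Sym2.eq_iff.mp hs with ⟨hA, hB⟩ | ⟨hA, hB⟩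
      · rw [hA, hB]
        exact hzz
      · rw [hA, hB]
        exact hzz.symm
  · -- distinct arcs meet only at vertices
    intro u v u' v' hadj hadj' hne p hp
    obtain ⟨hp1, hp2⟩ := hp
    obtain ⟨w, hw⟩ := hrange u v hadj
    obtain ⟨w', hw'⟩ := hrange u' v' hadj'
    rcases hw with ⟨hs, hr⟩ | ⟨hs, hr⟩ <;> rcases hw' with ⟨hs', hr'⟩ | ⟨hs', hr'⟩
    · obtain ⟨t, ht0, ht1, hpt⟩ := hr _ hp1
      obtain ⟨s, hs0, hs1, hps⟩ := hr' _ hp2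
      have hnew : s(w, w + (c₁ : ZMod N)) ≠ s(w', w' + (c₁ : ZMod N)) := by
        rw [← hs, ← hs']; exact hne
      have := hcross_hh w w' hnew t s ht0 ht1 hs0 hs1 (by rw [← hpt, ← hps])
      rw [hpt]
      exact this
    · obtain ⟨t, ht0, ht1, hpt⟩ := hr _ hp1
      obtain ⟨s, hs0, hs1, hps⟩ := hr' _ hp2
      have := hcross_hv w w' t s ht0 ht1 (by rw [← hpt, ← hps])
      rw [hpt]
      exact this
    · obtain ⟨t, ht0, ht1, hpt⟩ := hr _ hp1
      obtain ⟨s, hs0, hs1, hps⟩ := hr' _ hp2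
      have := hcross_hv w' w s t hs0 hs1 (by rw [← hps, ← hpt])
      rw [hps]
      exact this
    · obtain ⟨t, ht0, ht1, hpt⟩ := hr _ hp1
      obtain ⟨s, hs0, hs1, hps⟩ := hr' _ hp2
      have hnew : s(w, w + (c₂ : ZMod N)) ≠ s(w', w' + (c₂ : ZMod N)) := by
        rw [← hs, ← hs']; exact hne
      have := hcross_vv w w' hnew t s ht0 ht1 hs0 hs1 (by rw [← hpt, ← hps])
      rw [hpt]
      exact this
end

section
/- Let a_0, a_1, ... be a sequence of pairwise distinct reals, and for each N let G_N be the N-th sequence graph. For N < M, let G_N' be the graph obtained from G_N by deleting the edge (N-1, 0) of the first Hamiltonian cycle. Then G_N' is a topological minor of G_M. -/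
/-- The `N`-th sequence graph for a sequence sorted by the permutation `π`. -/
def seqGraph (N : ℕ) [NeZero N] (π : Equiv.Perm (Fin N)) : SimpleGraph (Fin N) :=
  SimpleGraph.fromRel fun i j => j = i + 1 ∨ j = π (π.symm i + 1)

/-- `H` is a topological minor of `G`: the vertices of `H` embed into `G`, and
the edges of `H` are realized by internally disjoint paths of `G` between the
corresponding branch vertices (i.e. a subdivision of `H` is a subgraph of `G`). -/
def IsTopologicalMinor {W V : Type*} (H : SimpleGraph W) (G : SimpleGraph V) : Prop :=
  ∃ φ : W → V, Function.Injective φ ∧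
    ∃ P : ∀ ⦃u v : W⦄, H.Adj u v → G.Walk (φ u) (φ v),
      (∀ u v (h : H.Adj u v), (P h).IsPath) ∧
      (∀ u v (h : H.Adj u v), ∀ w : W, φ w ∈ (P h).support → w = u ∨ w = v) ∧
      (∀ u v u' v' (h : H.Adj u v) (h' : H.Adj u' v'), s(u, v) ≠ s(u', v') →
        ∀ x, x ∈ (P h).support → x ∈ (P h').support → x ∈ Set.range φ)


open SimpleGraph
open Fin.NatCast Fin.CommRing

namespace SeqGraphAux

lemma val_add_natCast {M : ℕ} [NeZero M] (p : Fin M) (i : ℕ) :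
    (p + (i : Fin M)).val = (p.val + i) % M := by
  rw [Fin.add_def]
  simp only [Fin.val_natCast]
  conv_rhs => rw [Nat.add_mod]
  rw [Nat.add_mod p.val (i % M), Nat.mod_mod_of_dvd i dvd_rfl]

lemma add_dist {M : ℕ} [NeZero M] (p q : Fin M) :
    p + (((q.val + M - p.val) % M : ℕ) : Fin M) = q := by
  have hM : 0 < M := Nat.pos_of_ne_zero (NeZero.ne M)
  have hp := p.isLt
  have hq := q.isLt
  apply Fin.ext
  rw [val_add_natCast]
  rw [Nat.add_mod p.val ((q.val + M - p.val) % M), Nat.mod_mod_of_dvd _ dvd_rfl,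
    ← Nat.add_mod]
  have h1 : p.val + (q.val + M - p.val) = q.val + M := by omega
  rw [h1, Nat.add_mod_right, Nat.mod_eq_of_lt hq]

variable {M : ℕ} [NeZero M] (πM : Equiv.Perm (Fin M))

lemma adj_succ (hM : 1 < M) (p : Fin M) : (seqGraph M πM).Adj (πM p) (πM (p + 1)) := by
  rw [seqGraph, SimpleGraph.fromRel_adj]
  refine ⟨fun hc => ?_, Or.inl (Or.inr (by rw [Equiv.symm_apply_apply]))⟩
  have h1 : p = p + 1 := πM.injective hc
  have h2 : p.val = (p + (1:Fin M)).val := by rw [← h1]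
  rw [show ((1:Fin M)) = ((1:ℕ) : Fin M) by simp, val_add_natCast] at h2
  have hp := p.isLt
  rcases Nat.lt_or_ge (p.val + 1) M with h | h
  · rw [Nat.mod_eq_of_lt h] at h2; omega
  · have : p.val + 1 = M := by omega
    rw [this, Nat.mod_self] at h2; omega

def ascWalk (hM : 1 < M) : (t : ℕ) → (p : Fin M) → (seqGraph M πM).Walk (πM p) (πM (p + (t : Fin M)))
  | 0, p => Walk.nil.copy rfl (congrArg πM (by simp))
  | (t+1), p => (Walk.cons (adj_succ πM hM p) (ascWalk hM t (p+1))).copy rfl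
      (congrArg πM (by push_cast; ring))

lemma ascWalk_support (hM : 1 < M) (t : ℕ) (p : Fin M) :
    (ascWalk πM hM t p).support = (List.range (t+1)).map (fun i : ℕ => πM (p + (i : Fin M))) := by
  induction t generalizing p with
  | zero => simp [ascWalk, List.range_succ]
  | succ t ih =>
    rw [ascWalk]
    simp only [Walk.support_copy, Walk.support_cons, ih]
    conv_rhs => rw [List.range_succ_eq_map]
    rw [List.map_cons, List.map_map]
    congr 1
    · simp
    · refine List.map_congr_left (fun i _ => ?_)
      simp only [Function.comp_apply]
      refine congrArg πM ?_
      push_cast [Nat.succ_eq_add_one]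
      ring

lemma mem_ascWalk_support (hM : 1 < M) (t : ℕ) (p : Fin M) (x : Fin M) :
    x ∈ (ascWalk πM hM t p).support ↔ ∃ i ≤ t, x = πM (p + (i : Fin M)) := by
  rw [ascWalk_support]
  simp only [List.mem_map, List.mem_range]
  constructor
  · rintro ⟨i, hi, rfl⟩; exact ⟨i, by omega, rfl⟩
  · rintro ⟨i, hi, rfl⟩; exact ⟨i, by omega, rfl⟩

lemma ascWalk_isPath (hM : 1 < M) (t : ℕ) (p : Fin M) (ht : t < M) :
    (ascWalk πM hM t p).IsPath := by
  rw [Walk.isPath_def, ascWalk_support]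
  refine List.Nodup.map_on ?_ List.nodup_range
  intro i hi j hj hij
  simp only [List.mem_range] at hi hj
  have h1 := πM.injective hij
  have h2 : (p + (i : Fin M)).val = (p + (j : Fin M)).val := by rw [h1]
  rw [val_add_natCast, val_add_natCast] at h2
  have hp := p.isLt
  rcases Nat.lt_or_ge (p.val + i) M with h | h <;>
    rcases Nat.lt_or_ge (p.val + j) M with h' | h'
  · rw [Nat.mod_eq_of_lt h, Nat.mod_eq_of_lt h'] at h2; omega
  · rw [Nat.mod_eq_of_lt h, Nat.mod_eq_sub_mod h', Nat.mod_eq_of_lt (by omega)] at h2; omega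
  · rw [Nat.mod_eq_sub_mod h, Nat.mod_eq_of_lt (by omega), Nat.mod_eq_of_lt h'] at h2; omega
  · rw [Nat.mod_eq_sub_mod h, Nat.mod_eq_of_lt (by omega), Nat.mod_eq_sub_mod h',
      Nat.mod_eq_of_lt (by omega)] at h2; omega

lemma val_succ {n : ℕ} [NeZero n] (k : Fin n) : ((k + 1 : Fin n) : ℕ) = ((k : ℕ) + 1) % n := by
  rw [show (1 : Fin n) = ((1 : ℕ) : Fin n) by simp, val_add_natCast]

end SeqGraphAux


open SeqGraphAux in
/-- For a sequence of pairwise distinct reals with `N < M`, the `N`-th sequence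
graph with the `C₁` edge `(N-1, 0)` deleted is a topological minor of the
`M`-th sequence graph. -/
theorem seqGraph_topological_minor (a : ℕ → ℝ) (ha : Function.Injective a)
    (N M : ℕ) [NeZero N] [NeZero M] (hNM : N < M)
    (πN : Equiv.Perm (Fin N))
    (hπN : ∀ i j : Fin N, i < j → a (πN i) < a (πN j))
    (πM : Equiv.Perm (Fin M))
    (hπM : ∀ i j : Fin M, i < j → a (πM i) < a (πM j)) :
    IsTopologicalMinor
      ((seqGraph N πN).deleteEdges
        {s((⟨N - 1, by have := Nat.pos_of_ne_zero (NeZero.ne N); omega⟩ : Fin N),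
          (⟨0, Nat.pos_of_ne_zero (NeZero.ne N)⟩ : Fin N))})
      (seqGraph M πM) := by
  classical
  have hN0 : 0 < N := Nat.pos_of_ne_zero (NeZero.ne N)
  have hM1 : 1 < M := by omega
  set φ : Fin N → Fin M := Fin.castLE hNM.le with hφ
  have hφinj : Function.Injective φ := Fin.castLE_injective _
  have hφval : ∀ w : Fin N, ((φ w : Fin M) : ℕ) = (w : ℕ) := fun w => rfl
  -- rank order
  have hg : ∀ x y : Fin M, a x < a y ↔ ((πM.symm x : Fin M) : ℕ) < ((πM.symm y : Fin M) : ℕ) := by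
    intro x y
    constructor
    · intro h
      rcases lt_trichotomy ((πM.symm x : Fin M) : ℕ) ((πM.symm y : Fin M) : ℕ) with hc | hc | hc
      · exact hc
      · exfalso
        have hxy : x = y := by
          have h1 := Fin.ext hc
          have h2 := congrArg πM h1
          simpa using h2
        subst hxy; exact lt_irrefl _ h
      · exfalso
        have h3 := hπM _ _ (show πM.symm y < πM.symm x from hc)
        simp only [Equiv.apply_symm_apply] at h3
        exact absurd h (not_lt.mpr h3.le)
    · intro h
      have h4 := hπM _ _ (show πM.symm x < πM.symm y from h)
      simpa using h4
  set pk : Fin N → Fin M := fun k => πM.symm (φ (πN k)) with hpk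
  have hpmono : ∀ m m' : Fin N, (m : ℕ) < (m' : ℕ) → ((pk m : Fin M) : ℕ) < ((pk m' : Fin M) : ℕ) := by
    intro m m' h
    have h2 := hπN m m' h
    rw [← hφval (πN m), ← hφval (πN m')] at h2
    exact (hg _ _).mp h2
  have hpmono_le : ∀ m m' : Fin N, (m : ℕ) ≤ (m' : ℕ) → ((pk m : Fin M) : ℕ) ≤ ((pk m' : Fin M) : ℕ) := by
    intro m m' h
    rcases eq_or_lt_of_le h with h | h
    · rw [Fin.ext h]
    · exact (hpmono m m' h).le
  set tk : Fin N → ℕ := fun k => (((pk (k+1) : Fin M) : ℕ) + M - ((pk k : Fin M) : ℕ)) % M with htk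
  have htk_lt : ∀ k, tk k < M := fun k => Nat.mod_lt _ (by omega)
  have hend : ∀ k : Fin N, pk k + ((tk k : ℕ) : Fin M) = pk (k+1) := fun k => add_dist _ _
  -- the two characterizations of tk
  have htkA : ∀ k : Fin N, (k : ℕ) + 1 < N → tk k = (pk (k+1) : Fin M).val - (pk k : Fin M).val := by
    intro k hk
    have h1 : ((k + 1 : Fin N) : ℕ) = (k : ℕ) + 1 := by
      rw [val_succ, Nat.mod_eq_of_lt hk]
    have h2 : ((pk k : Fin M) : ℕ) < (pk (k+1) : Fin M).val := hpmono k (k+1) (by omega)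
    have h3 := (pk (k+1) : Fin M).isLt
    have h4 : ((pk (k+1) : Fin M) : ℕ) + M - ((pk k : Fin M) : ℕ)
        = ((pk (k+1) : Fin M).val - (pk k : Fin M).val) + M := by omega
    rw [htk]
    simp only []
    rw [h4, Nat.add_mod_right, Nat.mod_eq_of_lt (by omega)]
  have htkB : ∀ k : Fin N, (k : ℕ) + 1 = N → 1 < N →
      tk k = (pk (k+1) : Fin M).val + M - (pk k : Fin M).val := by
    intro k hk hN1
    have h1 : ((k + 1 : Fin N) : ℕ) = 0 := by
      rw [val_succ, hk, Nat.mod_self]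
    have h2 : ((pk (k+1) : Fin M) : ℕ) < (pk k : Fin M).val := hpmono (k+1) k (by omega)
    rw [htk]
    simp only []
    rw [Nat.mod_eq_of_lt (by omega)]
  -- key1: points of the form pk m on the arc walk are endpoints
  have key1 : ∀ (k m : Fin N) (i : ℕ), i ≤ tk k →
      ((pk m : Fin M) : ℕ) = (((pk k : Fin M) : ℕ) + i) % M → m = k ∨ m = k + 1 := by
    intro k m i hi he
    have hkN := k.isLt
    have hmN := m.isLt
    have hPk := (pk k : Fin M).isLt
    have hPk1 := (pk (k+1) : Fin M).isLt
    have hPm := (pk m : Fin M).isLt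
    by_cases hk : (k : ℕ) + 1 < N
    · have h1 : ((k + 1 : Fin N) : ℕ) = (k : ℕ) + 1 := by
        rw [val_succ, Nat.mod_eq_of_lt hk]
      have h2 : ((pk k : Fin M) : ℕ) < (pk (k+1) : Fin M).val := hpmono k (k+1) (by omega)
      rw [htkA k hk] at hi
      rw [Nat.mod_eq_of_lt (by omega)] at he
      rcases lt_trichotomy (m : ℕ) (k : ℕ) with h | h | h
      · exact absurd (hpmono m k h) (by omega)
      · exact Or.inl (Fin.ext h)
      · rcases lt_trichotomy (m : ℕ) ((k + 1 : Fin N) : ℕ) with h' | h' | h'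
        · omega
        · exact Or.inr (Fin.ext h')
        · exact absurd (hpmono (k+1) m h') (by omega)
    · have hk' : (k : ℕ) + 1 = N := by omega
      by_cases hN1 : N = 1
      · exact Or.inl (Fin.ext (by omega))
      · have h1 : ((k + 1 : Fin N) : ℕ) = 0 := by rw [val_succ, hk', Nat.mod_self]
        have h2 : ((pk (k+1) : Fin M) : ℕ) < (pk k : Fin M).val := hpmono (k+1) k (by omega)
        rw [htkB k hk' (by omega)] at hi
        rcases Nat.lt_or_ge (((pk k : Fin M) : ℕ) + i) M with hiM | hiM
        · rw [Nat.mod_eq_of_lt hiM] at he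
          rcases eq_or_lt_of_le (show (m : ℕ) ≤ (k : ℕ) by omega) with h | h
          · exact Or.inl (Fin.ext h)
          · exact absurd (hpmono m k h) (by omega)
        · rw [Nat.mod_eq_sub_mod hiM, Nat.mod_eq_of_lt (by omega)] at he
          rcases Nat.eq_zero_or_pos (m : ℕ) with h | h
          · exact Or.inr (Fin.ext (by omega))
          · exact absurd (hpmono (k+1) m (by omega)) (by omega)
  -- characterization of interior points
  have hchar : ∀ (k : Fin N) (i : ℕ), 0 < i → i < tk k →
      (((k : ℕ) + 1 < N ∧ ((k + 1 : Fin N) : ℕ) = (k : ℕ) + 1 ∧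
        ((pk k : Fin M) : ℕ) < (((pk k : Fin M) : ℕ) + i) % M ∧
        (((pk k : Fin M) : ℕ) + i) % M < ((pk (k+1) : Fin M) : ℕ))
      ∨ ((k : ℕ) + 1 = N ∧ ((k + 1 : Fin N) : ℕ) = 0 ∧
        (((pk k : Fin M) : ℕ) < (((pk k : Fin M) : ℕ) + i) % M ∨
         (((pk k : Fin M) : ℕ) + i) % M < ((pk (k+1) : Fin M) : ℕ)))) := by
    intro k i hi0 hit
    have hkN := k.isLt
    have hPk := (pk k : Fin M).isLt
    have hPk1 := (pk (k+1) : Fin M).isLt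
    by_cases hk : (k : ℕ) + 1 < N
    · have h1 : ((k + 1 : Fin N) : ℕ) = (k : ℕ) + 1 := by
        rw [val_succ, Nat.mod_eq_of_lt hk]
      have h2 : ((pk k : Fin M) : ℕ) < (pk (k+1) : Fin M).val := hpmono k (k+1) (by omega)
      rw [htkA k hk] at hit
      rw [Nat.mod_eq_of_lt (by omega)]
      exact Or.inl ⟨hk, h1, by omega, by omega⟩
    · have hk' : (k : ℕ) + 1 = N := by omega
      by_cases hN1 : N = 1
      · exfalso
        have hkk1 : k + 1 = k := by
          apply Fin.ext
          rw [val_succ, hk', Nat.mod_self]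
          omega
        rw [htk] at hit
        simp only [hkk1] at hit
        rw [show ((pk k : Fin M) : ℕ) + M - ((pk k : Fin M) : ℕ) = M by omega,
          Nat.mod_self] at hit
        omega
      · have h1 : ((k + 1 : Fin N) : ℕ) = 0 := by rw [val_succ, hk', Nat.mod_self]
        have h2 : ((pk (k+1) : Fin M) : ℕ) < (pk k : Fin M).val := hpmono (k+1) k (by omega)
        rw [htkB k hk' (by omega)] at hit
        refine Or.inr ⟨hk', h1, ?_⟩
        rcases Nat.lt_or_ge (((pk k : Fin M) : ℕ) + i) M with hiM | hiM
        · rw [Nat.mod_eq_of_lt hiM]; omega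
        · rw [Nat.mod_eq_sub_mod hiM, Nat.mod_eq_of_lt (by omega)]; omega
  -- key2: interiors of distinct arcs are disjoint
  have key2 : ∀ (k k' : Fin N), k ≠ k' → ∀ (i i' : ℕ), 0 < i → i < tk k → 0 < i' → i' < tk k' →
      (((pk k : Fin M) : ℕ) + i) % M ≠ (((pk k' : Fin M) : ℕ) + i') % M := by
    intro k k' hkk i i' hi0 hit hi0' hit' he
    have hc := hchar k i hi0 hit
    have hc' := hchar k' i' hi0' hit'
    rw [he] at hc
    set X := (((pk k' : Fin M) : ℕ) + i') % M with hX
    rcases hc with ⟨hk, hk1, hlo, hhi⟩ | ⟨hk, hk1, hor⟩ <;>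
      rcases hc' with ⟨hk', hk1', hlo', hhi'⟩ | ⟨hk', hk1', hor'⟩
    · rcases Nat.lt_or_ge (k : ℕ) (k' : ℕ) with h | h
      · have := hpmono_le (k+1) k' (by omega)
        omega
      · have h' : (k' : ℕ) < (k : ℕ) := by
          rcases eq_or_lt_of_le h with h | h
          · exact absurd (Fin.ext h.symm) hkk
          · exact h
        have := hpmono_le (k'+1) k (by omega)
        omega
    · -- k' is the last arc, k is a middle arc
      have h1 := hpmono_le (k+1) k' (by omega)
      have h2 := hpmono_le (k'+1) k (by omega)
      omega
    · have h1 := hpmono_le (k'+1) k (by omega)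
      have h2 := hpmono_le (k+1) k' (by omega)
      omega
    · exact hkk (Fin.ext (by omega))
  -- vertices of the deleted edge
  have hlastlt : N - 1 < N := by omega
  set vlast : Fin N := ⟨N - 1, hlastlt⟩ with hvlast
  set v0 : Fin N := ⟨0, hN0⟩ with hv0
  suffices hsuff : IsTopologicalMinor
      ((seqGraph N πN).deleteEdges {s(vlast, v0)}) (seqGraph M πM) by exact hsuff
  have hadjH : ∀ u v : Fin N, ((seqGraph N πN).deleteEdges {s(vlast, v0)}).Adj u v →
      u ≠ v ∧ ((v = u + 1 ∨ v = πN (πN.symm u + 1)) ∨ (u = v + 1 ∨ u = πN (πN.symm v + 1))) ∧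
        s(u, v) ≠ s(vlast, v0) := by
    intro u v h
    rw [SimpleGraph.deleteEdges_adj, seqGraph, SimpleGraph.fromRel_adj,
      Set.mem_singleton_iff] at h
    tauto
  have hclass : ∀ u v : Fin N, ((seqGraph N πN).deleteEdges {s(vlast, v0)}).Adj u v →
      ¬((u : ℕ) + 1 = (v : ℕ) ∨ (v : ℕ) + 1 = (u : ℕ)) →
      ∃ k : Fin N, (u = πN k ∧ v = πN (k + 1)) ∨ (v = πN k ∧ u = πN (k + 1)) := by
    intro u v h h1
    obtain ⟨hne, hrel, hdel⟩ := hadjH u v h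
    rcases hrel with (hv | hv) | (hv | hv)
    · exfalso
      have h2 : (v : ℕ) = ((u : ℕ) + 1) % N := by rw [hv, val_succ]
      rcases Nat.lt_or_ge ((u : ℕ) + 1) N with h3 | h3
      · rw [Nat.mod_eq_of_lt h3] at h2
        exact h1 (Or.inl h2.symm)
      · have hu : (u : ℕ) = N - 1 := by have := u.isLt; omega
        have hv0' : (v : ℕ) = 0 := by
          rw [h2, show (u : ℕ) + 1 = N by omega, Nat.mod_self]
        exact hdel (by rw [show u = vlast from Fin.ext hu, show v = v0 from Fin.ext hv0'])
    · exact ⟨πN.symm u, Or.inl ⟨(πN.apply_symm_apply u).symm, hv⟩⟩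
    · exfalso
      have h2 : (u : ℕ) = ((v : ℕ) + 1) % N := by rw [hv, val_succ]
      rcases Nat.lt_or_ge ((v : ℕ) + 1) N with h3 | h3
      · rw [Nat.mod_eq_of_lt h3] at h2
        exact h1 (Or.inr h2.symm)
      · have hvv : (v : ℕ) = N - 1 := by have := v.isLt; omega
        have hu0 : (u : ℕ) = 0 := by
          rw [h2, show (v : ℕ) + 1 = N by omega, Nat.mod_self]
        refine hdel ?_
        rw [show u = v0 from Fin.ext hu0, show v = vlast from Fin.ext hvv]
        exact Sym2.eq_swap
    · exact ⟨πN.symm v, Or.inr ⟨(πN.apply_symm_apply v).symm, hv⟩⟩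
  have hadj1 : ∀ u v : Fin N, u ≠ v → ((u : ℕ) + 1 = (v : ℕ) ∨ (v : ℕ) + 1 = (u : ℕ)) →
      (seqGraph M πM).Adj (φ u) (φ v) := by
    intro u v hne h1
    rw [seqGraph, SimpleGraph.fromRel_adj]
    refine ⟨fun hc => hne (hφinj hc), ?_⟩
    have huM := u.isLt
    have hvM := v.isLt
    rcases h1 with h1 | h1
    · refine Or.inl (Or.inl ?_)
      apply Fin.ext
      rw [show (1 : Fin M) = ((1 : ℕ) : Fin M) by simp, val_add_natCast, hφval, hφval,
        Nat.mod_eq_of_lt (by omega)]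
      omega
    · refine Or.inr (Or.inl ?_)
      apply Fin.ext
      rw [show (1 : Fin M) = ((1 : ℕ) : Fin M) by simp, val_add_natCast, hφval, hφval,
        Nat.mod_eq_of_lt (by omega)]
      omega
  refine ⟨φ, hφinj,
    fun u v h =>
      if h1 : (u : ℕ) + 1 = (v : ℕ) ∨ (v : ℕ) + 1 = (u : ℕ) then
        Walk.cons (hadj1 u v h.ne h1) Walk.nil
      else if h2 : u = πN (Classical.choose (hclass u v h h1)) ∧
          v = πN (Classical.choose (hclass u v h h1) + 1) then
        (ascWalk πM hM1 (tk (Classical.choose (hclass u v h h1)))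
            (pk (Classical.choose (hclass u v h h1)))).copy
          ((πM.apply_symm_apply _).trans (congrArg φ h2.1.symm))
          (by rw [hend]; exact (πM.apply_symm_apply _).trans (congrArg φ h2.2.symm))
      else
        ((ascWalk πM hM1 (tk (Classical.choose (hclass u v h h1)))
            (pk (Classical.choose (hclass u v h h1)))).copy
          ((πM.apply_symm_apply _).trans (congrArg φ
            (((Classical.choose_spec (hclass u v h h1)).resolve_left h2).1.symm)))
          (by rw [hend]; exact (πM.apply_symm_apply _).trans (congrArg φ
            (((Classical.choose_spec (hclass u v h h1)).resolve_left h2).2.symm)))).reverse,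
    ?_, ?_, ?_⟩
  -- Property 1: each walk is a path
  · intro u v h
    dsimp only
    split_ifs with h1 h2
    · rw [Walk.cons_isPath_iff]
      refine ⟨Walk.IsPath.nil, ?_⟩
      simp only [Walk.support_nil, List.mem_singleton]
      exact fun hc => h.ne (hφinj hc)
    · simp only [Walk.isPath_copy]
      exact ascWalk_isPath _ _ _ _ (htk_lt _)
    · simp only [Walk.isPath_reverse_iff, Walk.isPath_copy]
      exact ascWalk_isPath _ _ _ _ (htk_lt _)
  -- Property 2: branch vertices on a walk are its endpoints
  · intro u v h w hw
    dsimp only at hw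
    split_ifs at hw with h1 h2
    · simp only [Walk.support_cons, Walk.support_nil, List.mem_cons,
        List.mem_singleton, List.not_mem_nil, or_false] at hw
      rcases hw with hw | hw
      · exact Or.inl (hφinj hw)
      · exact Or.inr (hφinj hw)
    · rw [Walk.support_copy, mem_ascWalk_support] at hw
      obtain ⟨i, hi, hwi⟩ := hw
      have hpkm : (pk (πN.symm w) : Fin M)
          = pk (Classical.choose (hclass u v h h1)) + ((i : ℕ) : Fin M) := by
        show πM.symm (φ (πN (πN.symm w))) = _
        rw [Equiv.apply_symm_apply, hwi, Equiv.symm_apply_apply]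
      have hv2 : ((pk (πN.symm w) : Fin M) : ℕ)
          = (((pk (Classical.choose (hclass u v h h1)) : Fin M) : ℕ) + i) % M := by
        rw [hpkm, val_add_natCast]
      rcases key1 _ (πN.symm w) i hi hv2 with hc | hc
      · left
        rw [h2.1, ← hc]
        exact (πN.apply_symm_apply w).symm
      · right
        rw [h2.2, ← hc]
        exact (πN.apply_symm_apply w).symm
    · have h3 := (Classical.choose_spec (hclass u v h h1)).resolve_left h2
      rw [Walk.support_reverse, List.mem_reverse, Walk.support_copy,
        mem_ascWalk_support] at hw
      obtain ⟨i, hi, hwi⟩ := hw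
      have hpkm : (pk (πN.symm w) : Fin M)
          = pk (Classical.choose (hclass u v h h1)) + ((i : ℕ) : Fin M) := by
        show πM.symm (φ (πN (πN.symm w))) = _
        rw [Equiv.apply_symm_apply, hwi, Equiv.symm_apply_apply]
      have hv2 : ((pk (πN.symm w) : Fin M) : ℕ)
          = (((pk (Classical.choose (hclass u v h h1)) : Fin M) : ℕ) + i) % M := by
        rw [hpkm, val_add_natCast]
      rcases key1 _ (πN.symm w) i hi hv2 with hc | hc
      · right
        rw [h3.1, ← hc]
        exact (πN.apply_symm_apply w).symm
      · left
        rw [h3.2, ← hc]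
        exact (πN.apply_symm_apply w).symm
  -- Property 3: distinct walks only meet in branch vertices
  · have hpkval : ∀ k : Fin N, πM (pk k) = φ (πN k) := fun k => πM.apply_symm_apply _
    have hendval : ∀ k : Fin N, πM (pk k + ((tk k : ℕ) : Fin M)) = φ (πN (k + 1)) := by
      intro k
      rw [hend]
      exact πM.apply_symm_apply _
    intro u v u' v' h h' hne x hx hx'
    dsimp only at hx hx'
    by_cases h1 : (u : ℕ) + 1 = (v : ℕ) ∨ (v : ℕ) + 1 = (u : ℕ)
    · rw [dif_pos h1] at hx
      simp only [Walk.support_cons, Walk.support_nil, List.mem_cons,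
        List.mem_singleton, List.not_mem_nil, or_false] at hx
      rcases hx with hx | hx
      · exact ⟨u, hx.symm⟩
      · exact ⟨v, hx.symm⟩
    by_cases h1' : (u' : ℕ) + 1 = (v' : ℕ) ∨ (v' : ℕ) + 1 = (u' : ℕ)
    · rw [dif_pos h1'] at hx'
      simp only [Walk.support_cons, Walk.support_nil, List.mem_cons,
        List.mem_singleton, List.not_mem_nil, or_false] at hx'
      rcases hx' with hx' | hx'
      · exact ⟨u', hx'.symm⟩
      · exact ⟨v', hx'.symm⟩
    rw [dif_neg h1] at hx
    rw [dif_neg h1'] at hx'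
    have hpair : s(u, v) = s(πN (Classical.choose (hclass u v h h1)),
        πN (Classical.choose (hclass u v h h1) + 1)) := by
      rcases Classical.choose_spec (hclass u v h h1) with ⟨e1, e2⟩ | ⟨e1, e2⟩
      · rw [← e1, ← e2]
      · rw [← e1, ← e2]
        exact Sym2.eq_swap
    have hpair' : s(u', v') = s(πN (Classical.choose (hclass u' v' h' h1')),
        πN (Classical.choose (hclass u' v' h' h1') + 1)) := by
      rcases Classical.choose_spec (hclass u' v' h' h1') with ⟨e1, e2⟩ | ⟨e1, e2⟩
      · rw [← e1, ← e2]
      · rw [← e1, ← e2]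
        exact Sym2.eq_swap
    have hkk : Classical.choose (hclass u v h h1) ≠ Classical.choose (hclass u' v' h' h1') := by
      intro hE
      exact hne (by rw [hpair, hpair', hE])
    have hxk : x ∈ (ascWalk πM hM1 (tk (Classical.choose (hclass u v h h1)))
        (pk (Classical.choose (hclass u v h h1)))).support := by
      split_ifs at hx with h2
      · rwa [Walk.support_copy] at hx
      · rwa [Walk.support_reverse, List.mem_reverse, Walk.support_copy] at hx
    have hxk' : x ∈ (ascWalk πM hM1 (tk (Classical.choose (hclass u' v' h' h1')))
        (pk (Classical.choose (hclass u' v' h' h1')))).support := by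
      split_ifs at hx' with h2'
      · rwa [Walk.support_copy] at hx'
      · rwa [Walk.support_reverse, List.mem_reverse, Walk.support_copy] at hx'
    rw [mem_ascWalk_support] at hxk hxk'
    obtain ⟨i, hi, hxi⟩ := hxk
    obtain ⟨i', hi', hxi'⟩ := hxk'
    rcases Nat.eq_zero_or_pos i with h0 | h0
    · subst h0
      refine ⟨πN (Classical.choose (hclass u v h h1)), ?_⟩
      rw [hxi, Nat.cast_zero, add_zero, hpkval]
    rcases eq_or_lt_of_le hi with hT | hT
    · refine ⟨πN (Classical.choose (hclass u v h h1) + 1), ?_⟩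
      rw [hxi, hT, hendval]
    rcases Nat.eq_zero_or_pos i' with h0' | h0'
    · subst h0'
      refine ⟨πN (Classical.choose (hclass u' v' h' h1')), ?_⟩
      rw [hxi', Nat.cast_zero, add_zero, hpkval]
    rcases eq_or_lt_of_le hi' with hT' | hT'
    · refine ⟨πN (Classical.choose (hclass u' v' h' h1') + 1), ?_⟩
      rw [hxi', hT', hendval]
    exfalso
    refine key2 _ _ hkk i i' h0 hT h0' hT' ?_
    have hEq : πM (pk (Classical.choose (hclass u v h h1)) + ((i : ℕ) : Fin M))
        = πM (pk (Classical.choose (hclass u' v' h' h1')) + ((i' : ℕ) : Fin M)) := by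
      rw [← hxi, ← hxi']
    have hEq2 := πM.injective hEq
    rw [← val_add_natCast, ← val_add_natCast, hEq2]
end

section
/- For the binary van der Corput sequence and N = 2^L, among the first N terms the set of consecutive differences {a_{i+1} - a_i : 0 ≤ i < N - 1} has exactly L distinct values, namely -1 + 3/2^{k+1} for k = 0, 1, ..., L-1. -/
/-- The binary van der Corput sequence. -/
noncomputable def vdc (n : ℕ) : ℝ :=
  ∑ k ∈ Finset.range (n + 1), (if n.testBit k then (1 : ℝ) else 0) / 2 ^ (k + 1)

lemma vdc_eq_sum (n M : ℕ) (h : n < M) :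
    vdc n = ∑ k ∈ Finset.range M, (if n.testBit k then (1 : ℝ) else 0) / 2 ^ (k + 1) := by
  apply Finset.sum_subset (Finset.range_subset_range.2 h)
  intro k _ hk'
  simp only [Finset.mem_range, not_lt] at hk'
  have : n < 2 ^ k := lt_of_lt_of_le (Nat.lt_two_pow_self (n := n)) (Nat.pow_le_pow_right (by norm_num) (by omega))
  simp [Nat.testBit_eq_false_of_lt this]

lemma vdc_two_mul (n : ℕ) : vdc (2 * n) = vdc n / 2 := by
  rw [vdc_eq_sum (2*n) (2*n+1+1) (by omega), Finset.sum_range_succ',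
    vdc_eq_sum n (2*n+1) (by omega), Finset.sum_div]
  have h0 : (2*n).testBit 0 = false := by simp [Nat.testBit_zero]
  have hs : ∀ i, (2*n).testBit (i+1) = n.testBit i := fun i => by simp [Nat.testBit_succ]
  have key : ∀ i : ℕ, ((if n.testBit i then (1:ℝ) else 0) / 2 ^ (i+1+1)) =
      ((if n.testBit i then (1:ℝ) else 0) / 2 ^ (i+1)) / 2 := fun i => by rw [pow_succ, div_div]
  simp only [hs, h0, key]
  simp

lemma vdc_two_mul_add_one (n : ℕ) : vdc (2 * n + 1) = 1 / 2 + vdc n / 2 := by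
  rw [vdc_eq_sum (2*n+1) (2*n+1+1) (by omega), Finset.sum_range_succ',
    vdc_eq_sum n (2*n+1) (by omega), Finset.sum_div]
  have hd : (2*n+1)/2 = n := by omega
  have h0 : (2*n+1).testBit 0 = true := by simp [Nat.testBit_zero]
  have hs : ∀ i, (2*n+1).testBit (i+1) = n.testBit i := fun i => by
    simp [Nat.testBit_succ, hd]
  have key : ∀ i : ℕ, ((if n.testBit i then (1:ℝ) else 0) / 2 ^ (i+1+1)) =
      ((if n.testBit i then (1:ℝ) else 0) / 2 ^ (i+1)) / 2 := fun i => by rw [pow_succ, div_div]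
  simp only [hs, h0, key]
  norm_num [add_comm]

/-- Number of trailing ones in the binary expansion of `n`. -/
def tOnes (n : ℕ) : ℕ := padicValNat 2 (n + 1)

lemma tOnes_two_mul (n : ℕ) : tOnes (2 * n) = 0 :=
  padicValNat.eq_zero_of_not_dvd (by omega)

lemma tOnes_two_mul_add_one (n : ℕ) : tOnes (2 * n + 1) = tOnes n + 1 := by
  have : Fact (Nat.Prime 2) := ⟨Nat.prime_two⟩
  have h : 2*n+1+1 = 2*(n+1) := by ring
  rw [tOnes, h, padicValNat.mul (by norm_num) (by omega), padicValNat.self (by norm_num)]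
  rw [tOnes, add_comm]

lemma vdc_diff (n : ℕ) : vdc (n + 1) - vdc n = -1 + 3 / 2 ^ (tOnes n + 1) := by
  induction n using Nat.strong_induction_on with
  | _ n ih =>
    rcases Nat.even_or_odd n with ⟨m, hm⟩ | ⟨m, hm⟩
    · subst hm
      rw [show m + m = 2 * m by ring, show 2*m+1 = 2*m+1 from rfl,
        vdc_two_mul, vdc_two_mul_add_one, tOnes_two_mul]
      ring
    · subst hm
      rw [show 2*m+1+1 = 2*(m+1) by ring, vdc_two_mul, vdc_two_mul_add_one,
        tOnes_two_mul_add_one]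
      have := ih m (by omega)
      have h2 : (2:ℝ) ^ (tOnes m + 1) ≠ 0 := by positivity
      rw [sub_eq_iff_eq_add] at this
      rw [this]
      rw [pow_succ]
      field_simp
      ring

lemma tOnes_lt {L i : ℕ} (h : i < 2 ^ L - 1) : tOnes i < L := by
  have hd : (2:ℕ) ^ tOnes i ∣ i + 1 := pow_padicValNat_dvd
  have h1 : 2 ^ tOnes i ≤ i + 1 := Nat.le_of_dvd (by omega) hd
  have h2 : i + 1 < 2 ^ L := by
    have : 1 ≤ 2 ^ L := Nat.one_le_two_pow
    omega
  exact (Nat.pow_lt_pow_iff_right (by norm_num)).1 (lt_of_le_of_lt h1 h2)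

lemma tOnes_pow_sub_one (k : ℕ) : tOnes (2 ^ k - 1) = k := by
  have : Fact (Nat.Prime 2) := ⟨Nat.prime_two⟩
  have h : 2 ^ k - 1 + 1 = 2 ^ k := by
    have : 1 ≤ 2 ^ k := Nat.one_le_two_pow
    omega
  rw [tOnes, h, padicValNat.prime_pow]

/-- For `N = 2^L` (with `L ≥ 1`), the set of consecutive differences
`a_{i+1} - a_i` for `0 ≤ i < N - 1` of the binary van der Corput sequence has
exactly `L` distinct values, namely `-1 + 3/2^(k+1)` for `k = 0, …, L-1`. -/
theorem vdc_consecutive_differences (L : ℕ) (hL : 1 ≤ L) :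
    (fun i : ℕ => vdc (i + 1) - vdc i) '' Set.Iio (2 ^ L - 1) =
        (fun k : ℕ => (-1 : ℝ) + 3 / 2 ^ (k + 1)) '' Set.Iio L ∧
      ((fun i : ℕ => vdc (i + 1) - vdc i) '' Set.Iio (2 ^ L - 1)).ncard = L := by
  have himg : (fun i : ℕ => vdc (i + 1) - vdc i) '' Set.Iio (2 ^ L - 1) =
      (fun k : ℕ => (-1 : ℝ) + 3 / 2 ^ (k + 1)) '' Set.Iio L := by
    ext x
    constructor
    · rintro ⟨i, hi, rfl⟩
      exact ⟨tOnes i, tOnes_lt hi, (vdc_diff i).symm⟩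
    · rintro ⟨k, hk, rfl⟩
      refine ⟨2 ^ k - 1, ?_, ?_⟩
      · have : (2:ℕ) ^ k < 2 ^ L := Nat.pow_lt_pow_right (by norm_num) hk
        have h1 : 1 ≤ 2 ^ k := Nat.one_le_two_pow
        simp only [Set.mem_Iio]
        omega
      · show vdc (2 ^ k - 1 + 1) - vdc (2 ^ k - 1) = _
        rw [vdc_diff, tOnes_pow_sub_one]
  refine ⟨himg, ?_⟩
  rw [himg]
  have hinj : Set.InjOn (fun k : ℕ => (-1 : ℝ) + 3 / 2 ^ (k + 1)) (Set.Iio L) := by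
    intro a _ b _ hab
    simp only [add_right_inj] at hab
    field_simp at hab
    rw [pow_right_inj₀ (by norm_num) (by norm_num)] at hab
    omega
  rw [Set.ncard_image_of_injOn hinj]
  rw [show (Set.Iio L : Set ℕ) = ↑(Finset.Iio L) by simp]
  rw [Set.ncard_coe_finset, Nat.card_Iio]
end
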